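/- arXiv:2010.13249 — 11 statements merged into one kernel-verified Lean document; each statement's English description precedes it below -/
import Mathlib

section
/- A finite set S ⊆ ℕ^d is coverable if and only if every subset of S is numerically coverable. -/
/-- A finite set `S ⊆ ℕ^d` is coverable if it can be partitioned into parts
`P 0, …, P (d-1)` such that any two distinct points in part `P i` differ in some
coordinate other than `i` (i.e. each part has at most one point on every line
parallel to the `i`-th coordinate axis). -/
def Coverable {d : ℕ} (S : Finset (Fin d → ℕ)) : Prop :=
  ∃ P : Fin d → Finset (Fin d → ℕ),
    (∀ i, P i ⊆ S) ∧
    (∀ x ∈ S, ∃! i, x ∈ P i) ∧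
    (∀ i, ∀ x ∈ P i, ∀ y ∈ P i, x ≠ y → ∃ j, j ≠ i ∧ x j ≠ y j)

/-- The projection of `S ⊆ ℕ^d` onto the coordinate hyperplane obtained by deleting the
`i`-th coordinate (realized by setting the `i`-th coordinate to `0`). -/
def coordProj {d : ℕ} (i : Fin d) (S : Finset (Fin d → ℕ)) : Finset (Fin d → ℕ) :=
  S.image (fun x => Function.update x i 0)

/-- A finite set `S ⊆ ℕ^d` is numerically coverable if
`∑_{i=1}^d |π_i(S)| ≥ |S|`. -/
def NumericallyCoverable {d : ℕ} (S : Finset (Fin d → ℕ)) : Prop :=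
  S.card ≤ ∑ i : Fin d, (coordProj i S).card

lemma update_eq_update_aux {d : ℕ} (i : Fin d) (x y : Fin d → ℕ)
    (h : ∀ j, j ≠ i → x j = y j) : Function.update x i 0 = Function.update y i 0 := by
  funext j
  by_cases hj : j = i
  · subst hj; simp
  · simp [Function.update_of_ne hj, h j hj]

/-- A finite set `S ⊆ ℕ^d` is coverable iff every subset of `S` is numerically
coverable. -/
theorem coverable_iff_numerically_coverable {d : ℕ} (S : Finset (Fin d → ℕ)) :
    Coverable S ↔ ∀ T ⊆ S, NumericallyCoverable T := by
  classical
  constructor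
  · rintro ⟨P, hPS, huniq, hsep⟩ T hTS
    -- T is covered by the parts P i ∩ T
    have hsub : T ⊆ Finset.univ.biUnion (fun i => P i ∩ T) := by
      intro x hx
      obtain ⟨i, hi, -⟩ := huniq x (hTS hx)
      exact Finset.mem_biUnion.mpr ⟨i, Finset.mem_univ _, Finset.mem_inter.mpr ⟨hi, hx⟩⟩
    have h1 : T.card ≤ ∑ i : Fin d, (P i ∩ T).card :=
      (Finset.card_le_card hsub).trans (Finset.card_biUnion_le)
    refine h1.trans (Finset.sum_le_sum fun i _ => ?_)
    -- |P i ∩ T| ≤ |coordProj i T|, since projection is injective on P i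
    have : (P i ∩ T).card = ((P i ∩ T).image (fun x => Function.update x i 0)).card := by
      rw [Finset.card_image_of_injOn]
      intro x hx y hy hxy
      by_contra hne
      obtain ⟨j, hji, hj⟩ := hsep i x (Finset.mem_inter.mp hx).1 y (Finset.mem_inter.mp hy).1 hne
      have := congrFun hxy j
      simp only [Function.update_of_ne hji] at this
      exact hj this
    rw [this]
    apply Finset.card_le_card
    apply Finset.image_subset_image
    exact Finset.inter_subset_right
  · intro hnum
    -- Hall's marriage theorem: match each point of S to a line through it.
    set t : {x // x ∈ S} → Finset (Fin d × (Fin d → ℕ)) :=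
      fun x => Finset.univ.image (fun i => (i, Function.update x.val i 0)) with ht
    have hall : ∀ s : Finset {x // x ∈ S}, s.card ≤ (s.biUnion t).card := by
      intro s
      set T : Finset (Fin d → ℕ) := s.image Subtype.val with hT
      have hcard : s.card = T.card :=
        (Finset.card_image_of_injective _ Subtype.val_injective).symm
      have hbU : s.biUnion t =
          Finset.univ.biUnion (fun i : Fin d => (coordProj i T).image (fun p => (i, p))) := by
        ext ⟨i, p⟩
        simp only [Finset.mem_biUnion, Finset.mem_image, Finset.mem_univ, true_and, ht,
          coordProj, hT, Prod.mk.injEq]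
        constructor
        · rintro ⟨a, ha, a1, rfl, rfl⟩
          exact ⟨a1, _, ⟨a.val, ⟨a, ha, rfl⟩, rfl⟩, rfl, rfl⟩
        · rintro ⟨a, a1, ⟨a2, ⟨b, hb, rfl⟩, rfl⟩, rfl, rfl⟩
          exact ⟨b, hb, a, rfl, rfl⟩
      have hdisj : ((Finset.univ : Finset (Fin d)) : Set (Fin d)).PairwiseDisjoint
          (fun i : Fin d => (coordProj i T).image (fun p => (i, p))) := by
        intro i _ j _ hij
        simp only [Finset.disjoint_left]
        rintro a ha hb
        obtain ⟨p, -, rfl⟩ := Finset.mem_image.mp ha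
        obtain ⟨q, -, hq⟩ := Finset.mem_image.mp hb
        exact hij ((Prod.mk.injEq _ _ _ _).mp hq.symm).1
      rw [hbU, Finset.card_biUnion hdisj]
      have : ∀ i : Fin d, ((coordProj i T).image (fun p => (i, p))).card
          = (coordProj i T).card := fun i =>
        Finset.card_image_of_injective _ (fun a b hab =>
          ((Prod.mk.injEq _ _ _ _).mp hab).2)
      simp only [this]
      rw [hcard]
      exact hnum T (by intro x hx; obtain ⟨y, -, rfl⟩ := Finset.mem_image.mp hx; exact y.2)
    obtain ⟨f, hfinj, hft⟩ := (Finset.all_card_le_biUnion_card_iff_exists_injective t).mp hall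
    -- direction assigned to each point of S
    refine ⟨fun i => S.attach.filter (fun x => (f x).1 = i) |>.image Subtype.val, ?_, ?_, ?_⟩
    · intro i x hx
      obtain ⟨y, -, rfl⟩ := Finset.mem_image.mp hx
      exact y.2
    · intro x hx
      refine ⟨(f ⟨x, hx⟩).1, ?_, ?_⟩
      · exact Finset.mem_image.mpr ⟨⟨x, hx⟩, Finset.mem_filter.mpr
          ⟨Finset.mem_attach _ _, rfl⟩, rfl⟩
      · intro i hi
        obtain ⟨y, hy, hyx⟩ := Finset.mem_image.mp hi
        have := (Finset.mem_filter.mp hy).2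
        have hxy : y = ⟨x, hx⟩ := Subtype.ext hyx
        rw [hxy] at this
        exact this.symm
    · intro i x hx y hy hne
      obtain ⟨x', hx', rfl⟩ := Finset.mem_image.mp hx
      obtain ⟨y', hy', rfl⟩ := Finset.mem_image.mp hy
      have hxi : (f x').1 = i := (Finset.mem_filter.mp hx').2
      have hyi : (f y').1 = i := (Finset.mem_filter.mp hy').2
      by_contra hcon
      push_neg at hcon
      have hupd : Function.update x'.val i 0 = Function.update y'.val i 0 :=
        update_eq_update_aux i _ _ hcon
      -- get f x' = f y'
      obtain ⟨ix, -, hix⟩ := Finset.mem_image.mp (hft x')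
      obtain ⟨iy, -, hiy⟩ := Finset.mem_image.mp (hft y')
      have hix1 : ix = i := by rw [← hxi, ← hix]
      have hiy1 : iy = i := by rw [← hyi, ← hiy]
      have : f x' = f y' := by
        rw [← hix, ← hiy, hix1, hiy1, hupd]
      exact hne (congrArg Subtype.val (hfinj this))
end

section
/- Every finite set S ⊆ ℕ^d with |S| ≤ d^d is numerically coverable. -/
open Finset ENNReal NNReal

theorem coordProj_card_of_const {d : ℕ} {i₀ : Fin d} {t : ℕ} {A : Finset (Fin d → ℕ)}
    (h : ∀ x ∈ A, x i₀ = t) : (coordProj i₀ A).card = A.card := by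
  apply Finset.card_image_of_injOn
  intro x hx y hy hxy
  funext j
  by_cases hj : j = i₀
  · subst hj; rw [h x hx, h y hy]
  · have := congrFun hxy j
    simp only [Function.update_of_ne hj] at this
    exact this

theorem coordProj_comm {d : ℕ} {i j : Fin d} (hij : i ≠ j) (A : Finset (Fin d → ℕ)) :
    coordProj i (coordProj j A) = coordProj j (coordProj i A) := by
  unfold coordProj
  rw [Finset.image_image, Finset.image_image]
  congr 1
  funext x
  exact Function.update_comm hij.symm 0 0 x

theorem mem_coordProj_const {d : ℕ} {i i₀ : Fin d} (hi : i ≠ i₀) {t : ℕ}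
    {A : Finset (Fin d → ℕ)} (h : ∀ x ∈ A, x i₀ = t) :
    ∀ x ∈ coordProj i A, x i₀ = t := by
  intro x hx
  obtain ⟨y, hy, rfl⟩ := Finset.mem_image.mp hx
  rw [Function.update_of_ne (Ne.symm hi)]
  exact h y hy

open MeasureTheory in
theorem holder_finset {ι : Type*} (T : Finset ℕ) (u : Finset ι) (hu : u.Nonempty)
    (c : ι → ℕ → ℝ≥0∞) (hc : ∀ i ∈ u, ∀ t ∉ T, c i t = 0) :
    ∑ t ∈ T, ∏ i ∈ u, c i t ^ ((u.card : ℝ)⁻¹) ≤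
      ∏ i ∈ u, (∑ t ∈ T, c i t) ^ ((u.card : ℝ)⁻¹) := by
  have hm : (0:ℝ) < (u.card : ℝ) := by
    have := hu.card_pos; positivity
  have key := ENNReal.lintegral_prod_norm_pow_le (μ := Measure.count) u
    (f := c) (fun i _ => (measurable_from_nat (f := c i)).aemeasurable)
    (p := fun _ => (u.card : ℝ)⁻¹)
    (by rw [Finset.sum_const, nsmul_eq_mul, mul_inv_cancel₀ hm.ne'])
    (fun i _ => by positivity)
  rw [lintegral_count] at key
  have h1 : ∑' t, ∏ i ∈ u, c i t ^ ((u.card : ℝ)⁻¹) =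
      ∑ t ∈ T, ∏ i ∈ u, c i t ^ ((u.card : ℝ)⁻¹) := by
    apply tsum_eq_sum
    intro t ht
    obtain ⟨i₀, hi₀⟩ := hu
    refine Finset.prod_eq_zero hi₀ ?_
    rw [hc i₀ hi₀ t ht, ENNReal.zero_rpow_of_pos (by positivity)]
  rw [h1] at key
  refine key.trans (le_of_eq ?_)
  refine Finset.prod_congr rfl fun i hi => ?_
  rw [lintegral_count, tsum_eq_sum (fun t ht => hc i hi t ht)]

theorem discrete_LW {d : ℕ} (u : Finset (Fin d)) (S : Finset (Fin d → ℕ))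
    (hne : S.Nonempty) (hsupp : ∀ x ∈ S, ∀ i ∉ u, x i = 0) :
    (S.card : ℝ≥0∞) ^ (u.card - 1) ≤ ∏ i ∈ u, ((coordProj i S).card : ℝ≥0∞) := by
  classical
  obtain ⟨n, hn⟩ : ∃ n, u.card = n := ⟨_, rfl⟩
  induction n generalizing u S with
  | zero =>
    rw [Finset.card_eq_zero.mp hn]
    simp
  | succ m ih =>
    -- coordProj of a nonempty set is nonempty, so each factor is ≥ 1
    have hproj_pos : ∀ i : Fin d, (1:ℝ≥0∞) ≤ ((coordProj i S).card : ℝ≥0∞) := by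
      intro i
      have : (coordProj i S).Nonempty := hne.image _
      exact_mod_cast this.card_pos
    rcases Nat.eq_zero_or_pos m with hm | hm
    · subst hm
      rw [hn]
      simpa using Finset.one_le_prod' (fun i _ => hproj_pos i)
    -- main case : m ≥ 1
    have hu : u.Nonempty := Finset.card_pos.mp (by omega)
    obtain ⟨i₀, hi₀⟩ := hu
    set u' := u.erase i₀ with hu'
    have hcard' : u'.card = m := by
      rw [hu', Finset.card_erase_of_mem hi₀, hn]
      omega
    have hu'ne : u'.Nonempty := Finset.card_pos.mp (by omega)
    set T := S.image (fun x => x i₀) with hT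
    set St : ℕ → Finset (Fin d → ℕ) := fun t => S.filter (fun x => x i₀ = t) with hSt
    set c : Fin d → ℕ → ℝ≥0∞ := fun i t => ((coordProj i (St t)).card : ℝ≥0∞) with hc
    set a : Fin d → ℝ≥0∞ := fun i => ((coordProj i S).card : ℝ≥0∞) with ha
    set r : ℝ := (m : ℝ)⁻¹ with hr
    have hm' : (m:ℝ) ≠ 0 := by positivity
    have hrpos : (0:ℝ) < r := by positivity
    -- rpow helper
    have hxm : ∀ x : ℝ≥0∞, (x ^ (m:ℕ)) ^ r = x := by
      intro x
      rw [← ENNReal.rpow_natCast, ← ENNReal.rpow_mul, mul_inv_cancel₀ hm', ENNReal.rpow_one]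
    -- slice facts
    have hSt_const : ∀ t, ∀ x ∈ St t, x i₀ = t := fun t x hx => (Finset.mem_filter.mp hx).2
    have hBcard : ∀ t, ((coordProj i₀ (St t)).card) = (St t).card :=
      fun t => coordProj_card_of_const (hSt_const t)
    -- |B t| ≤ a i₀
    have hBsub : ∀ t, coordProj i₀ (St t) ⊆ coordProj i₀ S :=
      fun t => Finset.image_subset_image (Finset.filter_subset _ _)
    -- projections of slices sum to projections of S, for i ∈ u'
    have hsum_c : ∀ i ∈ u', ∑ t ∈ T, c i t = a i := by
      intro i hi
      have hii₀ : i ≠ i₀ := Finset.ne_of_mem_erase hi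
      have hSbi : T.biUnion St = S :=
        Finset.biUnion_filter_eq_of_maps_to (fun x hx => Finset.mem_image_of_mem _ hx)
      have himg : coordProj i S = T.biUnion (fun t => coordProj i (St t)) := by
        conv_lhs => rw [← hSbi]
        unfold coordProj
        ext z
        simp [Finset.mem_biUnion]
        tauto
      have hdisj : ∀ t₁ ∈ T, ∀ t₂ ∈ T, t₁ ≠ t₂ →
          Disjoint (coordProj i (St t₁)) (coordProj i (St t₂)) := by
        intro t₁ _ t₂ _ hne12
        rw [Finset.disjoint_left]
        intro z hz1 hz2
        have h1 := mem_coordProj_const hii₀ (hSt_const t₁) z hz1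
        have h2 := mem_coordProj_const hii₀ (hSt_const t₂) z hz2
        exact hne12 (h1 ▸ h2 ▸ rfl)
      show ∑ t ∈ T, c i t = ((coordProj i S).card : ℝ≥0∞)
      rw [himg, Finset.card_biUnion hdisj]
      push_cast
      rfl
    -- vanishing outside T
    have hc0 : ∀ i ∈ u', ∀ t ∉ T, c i t = 0 := by
      intro i _ t ht
      have : St t = ∅ := by
        rw [hSt]
        rw [Finset.filter_eq_empty_iff]
        intro x hx hxt
        exact ht (Finset.mem_image.mpr ⟨x, hx, hxt⟩)
      simp [hc, this, coordProj]
    -- the per-slice bound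
    have hslice : ∀ t ∈ T, ((St t).card : ℝ≥0∞) ≤ (a i₀) ^ r * ∏ i ∈ u', (c i t) ^ r := by
      intro t htT
      have hStne : (St t).Nonempty := by
        obtain ⟨x, hx, hxt⟩ := Finset.mem_image.mp htT
        exact ⟨x, Finset.mem_filter.mpr ⟨hx, hxt⟩⟩
      have hBne : (coordProj i₀ (St t)).Nonempty := hStne.image _
      -- support of B t on u'
      have hBsupp : ∀ x ∈ coordProj i₀ (St t), ∀ i ∉ u', x i = 0 := by
        intro x hx i hi
        obtain ⟨y, hy, rfl⟩ := Finset.mem_image.mp hx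
        by_cases hii : i = i₀
        · subst hii; simp
        · rw [Function.update_of_ne hii]
          refine hsupp y (Finset.mem_of_mem_filter y hy) i ?_
          intro hiu
          exact hi (Finset.mem_erase.mpr ⟨hii, hiu⟩)
      have hIH := ih u' (coordProj i₀ (St t)) hBne hBsupp hcard'
      rw [hcard'] at hIH
      -- identify projections of B t with projections of slices
      have hproj_eq : ∀ i ∈ u',
          ((coordProj i (coordProj i₀ (St t))).card : ℝ≥0∞) = c i t := by
        intro i hi
        have hii₀ : i ≠ i₀ := Finset.ne_of_mem_erase hi
        rw [coordProj_comm hii₀]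
        show _ = ((coordProj i (St t)).card : ℝ≥0∞)
        norm_cast
        exact coordProj_card_of_const (mem_coordProj_const hii₀ (hSt_const t))
      rw [Finset.prod_congr rfl hproj_eq] at hIH
      -- |St t| = |B t| = (|B t|^m)^r ≤ (a i₀ * ∏ c)^r
      have hkey : (((St t).card : ℝ≥0∞)) ^ (m:ℕ) ≤ a i₀ * ∏ i ∈ u', c i t := by
        have h1 : (((St t).card : ℝ≥0∞)) ^ (m:ℕ)
            = ((St t).card : ℝ≥0∞) * ((St t).card : ℝ≥0∞) ^ (m-1 : ℕ) := by
          rw [← pow_succ']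
          congr 1
          omega
        rw [h1]
        have h2 : ((St t).card : ℝ≥0∞) ≤ a i₀ := by
          show _ ≤ ((coordProj i₀ S).card : ℝ≥0∞)
          rw [← hBcard t]
          exact_mod_cast Finset.card_le_card (hBsub t)
        have h3 : ((St t).card : ℝ≥0∞) ^ (m-1 : ℕ) ≤ ∏ i ∈ u', c i t := by
          rw [← hBcard t]
          exact hIH
        exact mul_le_mul' h2 h3
      calc ((St t).card : ℝ≥0∞) = ((((St t).card : ℝ≥0∞)) ^ (m:ℕ)) ^ r := (hxm _).symm
        _ ≤ (a i₀ * ∏ i ∈ u', c i t) ^ r := ENNReal.rpow_le_rpow hkey hrpos.le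
        _ = (a i₀) ^ r * (∏ i ∈ u', c i t) ^ r := ENNReal.mul_rpow_of_nonneg _ _ hrpos.le
        _ = (a i₀) ^ r * ∏ i ∈ u', (c i t) ^ r := by
            rw [ENNReal.prod_rpow_of_nonneg hrpos.le]
    -- sum over slices
    have hcardsum : (S.card : ℝ≥0∞) = ∑ t ∈ T, ((St t).card : ℝ≥0∞) := by
      have := Finset.card_eq_sum_card_fiberwise
        (f := fun x => x i₀) (s := S) (t := T) (fun x hx => Finset.mem_image_of_mem _ hx)
      rw [this]
      push_cast
      rfl
    have hmain : (S.card : ℝ≥0∞) ≤ (∏ i ∈ u, a i) ^ r := by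
      calc (S.card : ℝ≥0∞) = ∑ t ∈ T, ((St t).card : ℝ≥0∞) := hcardsum
        _ ≤ ∑ t ∈ T, ((a i₀) ^ r * ∏ i ∈ u', (c i t) ^ r) := Finset.sum_le_sum hslice
        _ = (a i₀) ^ r * ∑ t ∈ T, ∏ i ∈ u', (c i t) ^ r := by rw [Finset.mul_sum]
        _ ≤ (a i₀) ^ r * ∏ i ∈ u', (∑ t ∈ T, c i t) ^ r := by
            gcongr
            have := holder_finset T u' hu'ne c hc0
            rw [hcard'] at this
            exact this
        _ = (a i₀) ^ r * ∏ i ∈ u', (a i) ^ r := by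
            congr 1
            exact Finset.prod_congr rfl fun i hi => by rw [hsum_c i hi]
        _ = (∏ i ∈ u, a i) ^ r := by
            rw [ENNReal.prod_rpow_of_nonneg hrpos.le, ← ENNReal.mul_rpow_of_nonneg _ _ hrpos.le]
            congr 1
            rw [← Finset.prod_insert (Finset.notMem_erase i₀ u), Finset.insert_erase hi₀]
    have := ENNReal.rpow_le_rpow hmain (by positivity : (0:ℝ) ≤ (m:ℝ))
    rw [← ENNReal.rpow_natCast _ (u.card - 1), hn]
    have hexp : ((m + 1 - 1 : ℕ) : ℝ) = (m : ℝ) := by norm_num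
    rw [hexp]
    calc (S.card : ℝ≥0∞) ^ (m:ℝ) ≤ ((∏ i ∈ u, a i) ^ r) ^ (m:ℝ) := this
      _ = ∏ i ∈ u, a i := by
          rw [← ENNReal.rpow_mul, hr, inv_mul_cancel₀ hm', ENNReal.rpow_one]


/-- Every finite set `S ⊆ ℕ^d` with `|S| ≤ d^d` is numerically coverable. -/
theorem numerically_coverable_of_card_le_pow {d : ℕ} (hd : 1 ≤ d)
    (S : Finset (Fin d → ℕ)) (hS : S.card ≤ d ^ d) :
    NumericallyCoverable S := by
  rcases S.eq_empty_or_nonempty with rfl | hne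
  · simp [NumericallyCoverable, coordProj]
  unfold NumericallyCoverable
  have hd0 : (d:ℝ) ≠ 0 := by positivity
  have hdN : ((d:ℝ≥0) : ℝ) = (d:ℝ) := rfl
  have hdnn : (d:ℝ≥0) ≠ 0 := by exact_mod_cast hd0
  -- Loomis–Whitney in ℕ
  have hLW : S.card ^ (d-1) ≤ ∏ i, (coordProj i S).card := by
    have h := discrete_LW Finset.univ S hne (by simp)
    rw [Finset.card_univ, Fintype.card_fin] at h
    have h2 : ((S.card ^ (d-1) : ℕ) : ℝ≥0∞) ≤ ((∏ i, (coordProj i S).card : ℕ) : ℝ≥0∞) := by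
      push_cast
      exact h
    exact_mod_cast h2
  -- n^d ≤ d^d * ∏ aᵢ in ℝ≥0
  have h1 : (S.card:ℝ≥0) ^ (d:ℕ) ≤ (d:ℝ≥0)^(d:ℕ) * ((∏ i, (coordProj i S).card : ℕ) : ℝ≥0) := by
    have hnat : S.card ^ d ≤ d^d * ∏ i, (coordProj i S).card := by
      calc S.card ^ d = S.card * S.card ^ (d-1) := by
            rw [← pow_succ']; congr 1; omega
        _ ≤ d^d * ∏ i, (coordProj i S).card := Nat.mul_le_mul hS hLW
    exact_mod_cast hnat
  -- rpow helper
  have hx : ∀ x : ℝ≥0, (x ^ (d:ℕ)) ^ ((d:ℝ)⁻¹) = x := by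
    intro x
    rw [← NNReal.rpow_natCast, ← NNReal.rpow_mul, mul_inv_cancel₀ hd0, NNReal.rpow_one]
  -- AM-GM
  have hAM : ((∏ i, (coordProj i S).card : ℕ) : ℝ≥0) ^ ((d:ℝ)⁻¹)
      ≤ (d:ℝ≥0)⁻¹ * ((∑ i, (coordProj i S).card : ℕ) : ℝ≥0) := by
    have h := NNReal.geom_mean_le_arith_mean_weighted Finset.univ (fun _ => (d:ℝ≥0)⁻¹)
      (fun i => ((coordProj i S).card : ℝ≥0))
      (by
        rw [Finset.sum_const, Finset.card_univ, Fintype.card_fin, nsmul_eq_mul]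
        exact mul_inv_cancel₀ hdnn)
    have hcoe : ((((d:ℝ≥0))⁻¹ : ℝ≥0) : ℝ) = (d:ℝ)⁻¹ := by push_cast; rfl
    simp only [hcoe] at h
    calc ((∏ i, (coordProj i S).card : ℕ) : ℝ≥0) ^ ((d:ℝ)⁻¹)
        = ∏ i, ((coordProj i S).card : ℝ≥0) ^ ((d:ℝ)⁻¹) := by
          rw [NNReal.finset_prod_rpow]
          push_cast
          rfl
      _ ≤ ∑ i, (d:ℝ≥0)⁻¹ * ((coordProj i S).card : ℝ≥0) := h
      _ = (d:ℝ≥0)⁻¹ * ((∑ i, (coordProj i S).card : ℕ) : ℝ≥0) := by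
          rw [← Finset.mul_sum]
          push_cast
          rfl
  -- combine
  have hfinal : (S.card : ℝ≥0) ≤ ((∑ i, (coordProj i S).card : ℕ) : ℝ≥0) := by
    calc (S.card : ℝ≥0) = ((S.card:ℝ≥0) ^ (d:ℕ)) ^ ((d:ℝ)⁻¹) := (hx _).symm
      _ ≤ ((d:ℝ≥0)^(d:ℕ) * ((∏ i, (coordProj i S).card : ℕ) : ℝ≥0)) ^ ((d:ℝ)⁻¹) :=
          NNReal.rpow_le_rpow h1 (by positivity)
      _ = ((d:ℝ≥0)^(d:ℕ)) ^ ((d:ℝ)⁻¹) * ((∏ i, (coordProj i S).card : ℕ) : ℝ≥0) ^ ((d:ℝ)⁻¹) :=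
          NNReal.mul_rpow
      _ = (d:ℝ≥0) * ((∏ i, (coordProj i S).card : ℕ) : ℝ≥0) ^ ((d:ℝ)⁻¹) := by rw [hx]
      _ ≤ (d:ℝ≥0) * ((d:ℝ≥0)⁻¹ * ((∑ i, (coordProj i S).card : ℕ) : ℝ≥0)) := by
          gcongr
      _ = ((∑ i, (coordProj i S).card : ℕ) : ℝ≥0) := by
          rw [← mul_assoc, mul_inv_cancel₀ hdnn, one_mul]
  exact_mod_cast hfinal
end

section
/- For every d ≥ 1 there exists a finite set S ⊆ ℕ^d with |S| = 1 + ∑_{i=1}^{d} i^i that is not coverable. -/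
open Finset

/-- The `k`-th block: coordinates `< k` range over `[0,k)`, coordinate `j ≥ k` is frozen
to `j+1`. -/
def block (d k : ℕ) : Finset (Fin d → ℕ) :=
  Fintype.piFinset (fun j => if (j : ℕ) < k then Finset.range k else {(j : ℕ) + 1})

def badSet (d : ℕ) : Finset (Fin d → ℕ) := (Finset.range (d+1)).biUnion (block d)

lemma mem_block {d k : ℕ} {x : Fin d → ℕ} :
    x ∈ block d k ↔ ∀ j : Fin d, ((j : ℕ) < k → x j < k) ∧ (k ≤ (j : ℕ) → x j = (j : ℕ) + 1) := by
  simp only [block, Fintype.mem_piFinset]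
  constructor
  · intro h j
    have := h j
    by_cases hj : (j : ℕ) < k
    · rw [if_pos hj] at this
      simp only [Finset.mem_range] at this
      exact ⟨fun _ => this, fun h' => absurd hj (by omega)⟩
    · rw [if_neg hj] at this
      simp only [Finset.mem_singleton] at this
      exact ⟨fun h' => absurd h' hj, fun _ => this⟩
  · intro h j
    by_cases hj : (j : ℕ) < k
    · rw [if_pos hj]; simpa using (h j).1 hj
    · rw [if_neg hj]; simpa using (h j).2 (by omega)

lemma card_filter_lt (d k : ℕ) (hk : k ≤ d) :
    ((Finset.univ : Finset (Fin d)).filter (fun j : Fin d => (j : ℕ) < k)).card = k := by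
  have h : ((Finset.univ : Finset (Fin d)).filter (fun j : Fin d => (j : ℕ) < k))
      = (Finset.univ : Finset (Fin k)).image (Fin.castLE hk) := by
    ext j
    simp only [mem_filter, mem_univ, true_and, mem_image]
    constructor
    · intro hj; exact ⟨⟨(j : ℕ), hj⟩, by simp [Fin.castLE, Fin.ext_iff]⟩
    · rintro ⟨a, rfl⟩; exact a.isLt
  rw [h, Finset.card_image_of_injective _ (Fin.castLE_injective hk)]
  simp

lemma card_block {d k : ℕ} (hk : k ≤ d) : (block d k).card = k ^ k := by
  rw [block, Fintype.card_piFinset]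
  have : ∀ j : Fin d,
      (if (j : ℕ) < k then Finset.range k else ({(j : ℕ) + 1} : Finset ℕ)).card
      = if (j : ℕ) < k then k else 1 := by
    intro j; by_cases hj : (j : ℕ) < k <;> simp [hj]
  rw [Finset.prod_congr rfl (fun j _ => this j), Finset.prod_ite, Finset.prod_const,
    Finset.prod_const_one, mul_one, card_filter_lt d k hk]

lemma block_disjoint {d k l : ℕ} (hkl : k < l) (hl : l ≤ d) :
    Disjoint (block d k) (block d l) := by
  rw [Finset.disjoint_left]
  intro x hxk hxl
  have hj : l - 1 < d := by omega
  have h1 := (mem_block.mp hxk ⟨l - 1, hj⟩).2 (by simpa using by omega)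
  have h2 := (mem_block.mp hxl ⟨l - 1, hj⟩).1 (by simpa using by omega)
  simp only at h1 h2
  omega

lemma card_badSet (d : ℕ) :
    (badSet d).card = 1 + ∑ i ∈ Finset.Icc 1 d, i ^ i := by
  rw [badSet, Finset.card_biUnion]
  · have h1 : Finset.range (d+1) = insert 0 (Finset.Icc 1 d) := by
      ext j; simp; omega
    rw [Finset.sum_congr rfl (fun k hk => card_block (by
        simp only [Finset.mem_range] at hk; omega)), h1,
      Finset.sum_insert (by simp)]
    simp
  · intro k hk l hl hne
    simp only [Finset.mem_coe, Finset.mem_range] at hk hl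
    rcases lt_or_gt_of_ne hne with h | h
    · exact block_disjoint h (by omega)
    · exact (block_disjoint h (by omega)).symm

lemma image_update_piFinset {d : ℕ} (i : Fin d) (t : Fin d → Finset ℕ) (ht : (t i).Nonempty) :
    (Fintype.piFinset t).image (fun x => Function.update x i 0)
      = Fintype.piFinset (Function.update t i {0}) := by
  ext y
  simp only [mem_image, Fintype.mem_piFinset]
  constructor
  · rintro ⟨x, hx, rfl⟩ j
    by_cases h : j = i
    · subst h; simp
    · simp [Function.update_of_ne h, hx j]
  · intro hy
    obtain ⟨a, ha⟩ := ht
    refine ⟨Function.update y i a, fun j => ?_, ?_⟩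
    · by_cases h : j = i
      · subst h; simpa using ha
      · have h2 := hy j
        rw [Function.update_of_ne h] at h2
        rw [Function.update_of_ne h]
        exact h2
    · funext j
      by_cases h : j = i
      · subst h
        have := hy j
        rw [Function.update_self] at this
        simp only [Finset.mem_singleton] at this
        simp [this]
      · simp [Function.update_of_ne h]

lemma card_image_block {d : ℕ} (i : Fin d) {k : ℕ} (hik : (i : ℕ) < k) (hk : k ≤ d) :
    ((block d k).image (fun x => Function.update x i 0)).card = k ^ (k - 1) := by
  rw [block, image_update_piFinset i _ (by
    rw [if_pos hik]; exact ⟨0, Finset.mem_range.mpr (by omega)⟩)]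
  rw [Fintype.card_piFinset]
  have hc : ∀ j : Fin d,
      ((Function.update (fun j : Fin d =>
        if (j : ℕ) < k then Finset.range k else ({(j : ℕ) + 1} : Finset ℕ)) i {0}) j).card
      = Function.update (fun j : Fin d => if (j : ℕ) < k then k else 1) i 1 j := by
    intro j
    by_cases h : j = i
    · subst h; simp
    · rw [Function.update_of_ne h, Function.update_of_ne h]
      by_cases hj : (j : ℕ) < k <;> simp [hj]
  rw [Finset.prod_congr rfl (fun j _ => hc j),
    Finset.prod_update_of_mem (Finset.mem_univ i), one_mul]
  have : (Finset.univ : Finset (Fin d)) \ {i} = Finset.univ.erase i := by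
    simp [Finset.erase_eq]
  rw [this, Finset.prod_ite, Finset.prod_const, Finset.prod_const_one, mul_one,
    Finset.filter_erase, Finset.card_erase_of_mem, card_filter_lt d k hk]
  simp [hik]

lemma proj_block_subset {d : ℕ} (i : Fin d) {k : ℕ} (hk : k ≤ (i : ℕ)) :
    (block d k).image (fun x => Function.update x i 0)
      ⊆ (block d ((i : ℕ) + 1)).image (fun x => Function.update x i 0) := by
  intro y hy
  obtain ⟨x, hx, rfl⟩ := Finset.mem_image.mp hy
  refine Finset.mem_image.mpr ⟨Function.update x i 0, ?_, by
    funext j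
    by_cases h : j = i
    · subst h; simp
    · simp [Function.update_of_ne h]⟩
  rw [mem_block]
  intro j
  by_cases h : j = i
  · subst h
    constructor
    · intro _; simp
    · intro hle; omega
  · rw [Function.update_of_ne h]
    have hxj := mem_block.mp hx j
    constructor
    · intro hji
      by_cases hjk : (j : ℕ) < k
      · have := hxj.1 hjk; omega
      · have := hxj.2 (by omega)
        have : (j : ℕ) ≠ (i : ℕ) := fun hc => h (Fin.ext hc)
        omega
    · intro hle
      exact hxj.2 (by omega)

lemma card_coordProj_le {d : ℕ} (i : Fin d) :
    (coordProj i (badSet d)).card ≤ ∑ k ∈ Finset.Icc ((i : ℕ) + 1) d, k ^ (k - 1) := by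
  classical
  have hsub : coordProj i (badSet d)
      ⊆ (Finset.Icc ((i : ℕ) + 1) d).biUnion
          (fun k => (block d k).image (fun x => Function.update x i 0)) := by
    intro y hy
    rw [coordProj, badSet, Finset.biUnion_image] at hy
    obtain ⟨k, hk, hyk⟩ := Finset.mem_biUnion.mp hy
    simp only [Finset.mem_range] at hk
    rcases le_or_gt k (i : ℕ) with h | h
    · exact Finset.mem_biUnion.mpr ⟨(i : ℕ) + 1,
        Finset.mem_Icc.mpr ⟨le_refl _, i.isLt⟩, proj_block_subset i h hyk⟩
    · exact Finset.mem_biUnion.mpr ⟨k, Finset.mem_Icc.mpr ⟨h, by omega⟩, hyk⟩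
  calc (coordProj i (badSet d)).card
      ≤ _ := Finset.card_le_card hsub
    _ ≤ ∑ k ∈ Finset.Icc ((i : ℕ) + 1) d,
          ((block d k).image (fun x => Function.update x i 0)).card :=
        Finset.card_biUnion_le
    _ ≤ ∑ k ∈ Finset.Icc ((i : ℕ) + 1) d, k ^ (k - 1) := by
        apply Finset.sum_le_sum
        intro k hk
        rw [Finset.mem_Icc] at hk
        rw [card_image_block i (by omega) hk.2]

lemma sum_proj_le (d : ℕ) :
    ∑ i : Fin d, (coordProj i (badSet d)).card ≤ ∑ k ∈ Finset.Icc 1 d, k ^ k := by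
  calc ∑ i : Fin d, (coordProj i (badSet d)).card
      ≤ ∑ i : Fin d, ∑ k ∈ Finset.Icc ((i : ℕ) + 1) d, k ^ (k - 1) :=
        Finset.sum_le_sum (fun i _ => card_coordProj_le i)
    _ = ∑ i : Fin d, ∑ k ∈ Finset.Icc 1 d, (if (i : ℕ) < k then k ^ (k - 1) else 0) := by
        apply Finset.sum_congr rfl
        intro i _
        rw [show Finset.Icc ((i : ℕ) + 1) d
            = (Finset.Icc 1 d).filter (fun k => (i : ℕ) < k) by
          ext k; simp only [Finset.mem_Icc, Finset.mem_filter]; omega]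
        rw [Finset.sum_filter]
    _ = ∑ k ∈ Finset.Icc 1 d, ∑ i : Fin d, (if (i : ℕ) < k then k ^ (k - 1) else 0) :=
        Finset.sum_comm
    _ = ∑ k ∈ Finset.Icc 1 d, k ^ k := by
        apply Finset.sum_congr rfl
        intro k hk
        rw [Finset.mem_Icc] at hk
        rw [← Finset.sum_filter, Finset.sum_const, card_filter_lt d k hk.2, smul_eq_mul]
        rw [← pow_succ']
        congr 1
        omega

lemma coverable_numerical {d : ℕ} {S : Finset (Fin d → ℕ)} (h : Coverable S) :
    NumericallyCoverable S := by
  obtain ⟨P, hsub, hcov, hsep⟩ := h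
  have h1 : S ⊆ Finset.univ.biUnion P := by
    intro x hx
    obtain ⟨i, hi, -⟩ := hcov x hx
    exact Finset.mem_biUnion.mpr ⟨i, Finset.mem_univ i, hi⟩
  have h2 : ∀ i : Fin d, (P i).card ≤ (coordProj i S).card := by
    intro i
    have himg : (P i).image (fun x => Function.update x i 0) ⊆ coordProj i S :=
      Finset.image_subset_image (hsub i)
    have hinj : Set.InjOn (fun x => Function.update x i 0) (P i : Set (Fin d → ℕ)) := by
      intro x hx y hy hxy
      by_contra hne
      obtain ⟨j, hji, hj⟩ := hsep i x hx y hy hne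
      have h3 := congrFun hxy j
      simp only at h3
      rw [Function.update_of_ne hji, Function.update_of_ne hji] at h3
      exact hj h3
    calc (P i).card = ((P i).image (fun x => Function.update x i 0)).card :=
          (Finset.card_image_of_injOn hinj).symm
      _ ≤ (coordProj i S).card := Finset.card_le_card himg
  calc S.card ≤ (Finset.univ.biUnion P).card := Finset.card_le_card h1
    _ ≤ ∑ i : Fin d, (P i).card := Finset.card_biUnion_le
    _ ≤ ∑ i : Fin d, (coordProj i S).card := Finset.sum_le_sum (fun i _ => h2 i)

/-- For every `d ≥ 1` there is a set of size `1 + ∑_{i=1}^d i^i` in `ℕ^d` which is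
not coverable. -/
theorem exists_non_coverable {d : ℕ} (hd : 1 ≤ d) :
    ∃ S : Finset (Fin d → ℕ),
      S.card = 1 + ∑ i ∈ Finset.Icc 1 d, i ^ i ∧ ¬ Coverable S := by
  refine ⟨badSet d, card_badSet d, fun hcov => ?_⟩
  have h1 := coverable_numerical hcov
  rw [NumericallyCoverable, card_badSet d] at h1
  have h2 := sum_proj_le d
  omega
end

section
/- A winning strategy for the hat-guessing game on K_{3,3} with 4 colors exists if and only if there exist three partitions (Fin 4)³ = P_1 ⊔ P_2 ⊔ P_3 ⊔ P_4 = Q_1 ⊔ Q_2 ⊔ Q_3 ⊔ Q_4 = R_1 ⊔ R_2 ⊔ R_3 ⊔ R_4 such that P_i ∪ Q_j ∪ R_k contains a 3 × 3 × 3 combinatorial cube for all choices of 1 ≤ i, j, k ≤ 4. -/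
/-- A winning strategy for the hat-guessing game on `G` with `q` colors. -/
def HatGuessingWins {V : Type*} (G : SimpleGraph V) (q : ℕ) : Prop :=
  ∃ f : ∀ v : V, (G.neighborSet v → Fin q) → Fin q,
    ∀ c : V → Fin q, ∃ v : V, f v (fun u => c u.1) = c v

/-- A point of the `4 × 4 × 4` grid. -/
abbrev GridPt : Type := Fin 4 × Fin 4 × Fin 4

/-- A `3 × 3 × 3` combinatorial cube in `(Fin 4)³`: a product `A ×ˢ B ×ˢ C` with
`|A| = |B| = |C| = 3`. -/
def IsCube (D : Finset GridPt) : Prop :=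
  ∃ A B C : Finset (Fin 4), A.card = 3 ∧ B.card = 3 ∧ C.card = 3 ∧ D = A ×ˢ B ×ˢ C

namespace K33Aux

abbrev KG : SimpleGraph (Fin 3 ⊕ Fin 3) := completeBipartiteGraph (Fin 3) (Fin 3)

lemma adj_lr (a b : Fin 3) : KG.Adj (.inl a) (.inr b) := Or.inl ⟨rfl, rfl⟩
lemma adj_rl (a b : Fin 3) : KG.Adj (.inr b) (.inl a) := Or.inr ⟨rfl, rfl⟩

lemma nbr_inl (a : Fin 3) (u : KG.neighborSet (Sum.inl a)) : ∃ b, u.1 = Sum.inr b := by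
  have h := u.2
  rcases h with ⟨_, h2⟩ | ⟨h1, _⟩
  · exact Sum.isRight_iff.mp h2
  · simp at h1

lemma nbr_inr (b : Fin 3) (u : KG.neighborSet (Sum.inr b)) : ∃ a, u.1 = Sum.inl a := by
  have h := u.2
  rcases h with ⟨h1, _⟩ | ⟨_, h2⟩
  · simp at h1
  · exact Sum.isLeft_iff.mp h2

/-- coordinates of a grid point as a vector -/
def vec (x : GridPt) : Fin 3 → Fin 4 := ![x.1, x.2.1, x.2.2]

/-- the coloring of `K33` determined by left colors `x` and right colors `y` -/
def col (x y : GridPt) : Fin 3 ⊕ Fin 3 → Fin 4 := Sum.elim (vec x) (vec y)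

/-- canonical restriction to neighbors of a left vertex -/
def restL (a : Fin 3) (y : GridPt) : KG.neighborSet (Sum.inl a) → Fin 4 :=
  fun u => Sum.elim (fun _ => 0) (vec y) u.1

/-- canonical restriction to neighbors of a right vertex -/
def restR (b : Fin 3) (x : GridPt) : KG.neighborSet (Sum.inr b) → Fin 4 :=
  fun u => Sum.elim (vec x) (fun _ => 0) u.1

lemma restL_eq (a : Fin 3) (x y : GridPt) :
    (fun u : KG.neighborSet (Sum.inl a) => col x y u.1) = restL a y := by
  funext u
  obtain ⟨b, hb⟩ := nbr_inl a u
  simp [restL, col, hb]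

lemma restR_eq (b : Fin 3) (x y : GridPt) :
    (fun u : KG.neighborSet (Sum.inr b) => col x y u.1) = restR b x := by
  funext u
  obtain ⟨a, ha⟩ := nbr_inr b u
  simp [restR, col, ha]

def nbL (a b : Fin 3) : KG.neighborSet (Sum.inl a) := ⟨Sum.inr b, adj_lr a b⟩
def nbR (b a : Fin 3) : KG.neighborSet (Sum.inr b) := ⟨Sum.inl a, adj_rl a b⟩

/-- extract the right coloring from a restriction at a left vertex -/
def extL (a : Fin 3) (r : KG.neighborSet (Sum.inl a) → Fin 4) : GridPt :=
  (r (nbL a 0), r (nbL a 1), r (nbL a 2))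

/-- extract the left coloring from a restriction at a right vertex -/
def extR (b : Fin 3) (r : KG.neighborSet (Sum.inr b) → Fin 4) : GridPt :=
  (r (nbR b 0), r (nbR b 1), r (nbR b 2))

lemma card3_missing (s : Finset (Fin 4)) (hs : s.card = 3) :
    ∃ t, ∀ u, u ≠ t → u ∈ s := by
  have hc : (Finset.univ \ s).card = 1 := by
    rw [Finset.card_sdiff_of_subset (Finset.subset_univ s), hs]
    rfl
  obtain ⟨t, ht⟩ := Finset.card_eq_one.mp hc
  refine ⟨t, fun u hu => ?_⟩
  by_contra h
  have : u ∈ Finset.univ \ s := by simp [h]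
  rw [ht] at this
  exact hu (Finset.mem_singleton.mp this)

lemma card_missing (t : Fin 4) : (Finset.univ \ {t}).card = 3 := by
  rw [Finset.card_sdiff_of_subset (Finset.subset_univ _)]
  rfl

end K33Aux

open K33Aux in
/-- A winning strategy for the hat-guessing game on `K_{3,3}` with 4 colors exists iff
there are three partitions `P, Q, R` of `(Fin 4)³` into four parts each such that every
union `P i ∪ Q j ∪ R k` contains a `3 × 3 × 3` combinatorial cube. -/
theorem K33_four_colors_iff_partitions :
    HatGuessingWins (completeBipartiteGraph (Fin 3) (Fin 3)) 4 ↔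
      ∃ P Q R : Fin 4 → Finset GridPt,
        (∀ x : GridPt, ∃! i, x ∈ P i) ∧
        (∀ x : GridPt, ∃! j, x ∈ Q j) ∧
        (∀ x : GridPt, ∃! k, x ∈ R k) ∧
        (∀ i j k : Fin 4, ∃ D : Finset GridPt, IsCube D ∧ D ⊆ P i ∪ Q j ∪ R k) := by
  constructor
  · rintro ⟨f, hf⟩
    refine ⟨fun i => Finset.univ.filter (fun x => f (.inr 0) (restR 0 x) = i),
            fun j => Finset.univ.filter (fun x => f (.inr 1) (restR 1 x) = j),
            fun k => Finset.univ.filter (fun x => f (.inr 2) (restR 2 x) = k),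
            ?_, ?_, ?_, ?_⟩
    · intro x
      exact ⟨f (.inr 0) (restR 0 x), by simp, fun i hi => ((Finset.mem_filter.mp hi).2).symm⟩
    · intro x
      exact ⟨f (.inr 1) (restR 1 x), by simp, fun i hi => ((Finset.mem_filter.mp hi).2).symm⟩
    · intro x
      exact ⟨f (.inr 2) (restR 2 x), by simp, fun i hi => ((Finset.mem_filter.mp hi).2).symm⟩
    · intro i j k
      set y : GridPt := (i, j, k) with hy
      refine ⟨(Finset.univ \ {f (.inl 0) (restL 0 y)}) ×ˢ
              (Finset.univ \ {f (.inl 1) (restL 1 y)}) ×ˢ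
              (Finset.univ \ {f (.inl 2) (restL 2 y)}),
              ⟨_, _, _, card_missing _, card_missing _, card_missing _, rfl⟩, ?_⟩
      intro x hx
      rw [Finset.mem_product, Finset.mem_product] at hx
      obtain ⟨hx1, hx2, hx3⟩ := hx
      simp only [Finset.mem_sdiff, Finset.mem_singleton, Finset.mem_univ, true_and] at hx1 hx2 hx3
      obtain ⟨v, hv⟩ := hf (col x y)
      rcases v with a | b
      · exfalso
        rw [restL_eq a x y] at hv
        fin_cases a
        · exact hx1 ((by simpa [col, vec] using hv : f (.inl 0) (restL 0 y) = _).symm)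
        · exact hx2 ((by simpa [col, vec] using hv : f (.inl 1) (restL 1 y) = _).symm)
        · exact hx3 ((by simpa [col, vec] using hv : f (.inl 2) (restL 2 y) = _).symm)
      · rw [restR_eq b x y] at hv
        simp only [Finset.mem_union, Finset.mem_filter, Finset.mem_univ, true_and]
        fin_cases b
        · exact Or.inl (Or.inl (by simpa [col, vec] using hv))
        · exact Or.inl (Or.inr (by simpa [col, vec] using hv))
        · exact Or.inr (by simpa [col, vec] using hv)
  · rintro ⟨P, Q, R, hP, hQ, hR, hcube⟩
    have hcube' : ∀ i j k : Fin 4, ∃ A B C : Finset (Fin 4),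
        A.card = 3 ∧ B.card = 3 ∧ C.card = 3 ∧ A ×ˢ B ×ˢ C ⊆ P i ∪ Q j ∪ R k := by
      intro i j k
      obtain ⟨D, ⟨A, B, C, hA, hB, hC, rfl⟩, hsub⟩ := hcube i j k
      exact ⟨A, B, C, hA, hB, hC, hsub⟩
    choose A B C hA hB hC hsub using hcube'
    choose mA hmA using fun i j k => card3_missing (A i j k) (hA i j k)
    choose mB hmB using fun i j k => card3_missing (B i j k) (hB i j k)
    choose mC hmC using fun i j k => card3_missing (C i j k) (hC i j k)
    choose pIdx hp1 hp2 using hP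
    choose qIdx hq1 hq2 using hQ
    choose rIdx hr1 hr2 using hR
    refine ⟨fun v => match v with
      | .inl a => fun r =>
          ![fun y : GridPt => mA y.1 y.2.1 y.2.2,
            fun y : GridPt => mB y.1 y.2.1 y.2.2,
            fun y : GridPt => mC y.1 y.2.1 y.2.2] a (extL a r)
      | .inr b => fun r => ![pIdx, qIdx, rIdx] b (extR b r), ?_⟩
    intro c
    set x : GridPt := (c (.inl 0), c (.inl 1), c (.inl 2)) with hx
    set y : GridPt := (c (.inr 0), c (.inr 1), c (.inr 2)) with hy
    by_cases h1 : c (.inl 0) ∈ A (c (.inr 0)) (c (.inr 1)) (c (.inr 2))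
    · by_cases h2 : c (.inl 1) ∈ B (c (.inr 0)) (c (.inr 1)) (c (.inr 2))
      · by_cases h3 : c (.inl 2) ∈ C (c (.inr 0)) (c (.inr 1)) (c (.inr 2))
        · have hxD : x ∈ A (c (.inr 0)) (c (.inr 1)) (c (.inr 2)) ×ˢ
              B (c (.inr 0)) (c (.inr 1)) (c (.inr 2)) ×ˢ
              C (c (.inr 0)) (c (.inr 1)) (c (.inr 2)) := by
            rw [Finset.mem_product, Finset.mem_product]
            exact ⟨h1, h2, h3⟩
          have := hsub _ _ _ hxD
          rw [Finset.mem_union, Finset.mem_union] at this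
          rcases this with (hmem | hmem) | hmem
          · refine ⟨.inr 0, ?_⟩
            show pIdx (extR 0 (fun u => c u.1)) = c (.inr 0)
            have hext : extR 0 (fun u : KG.neighborSet (Sum.inr 0) => c u.1) = x := rfl
            rw [hext]
            exact (hp2 x _ hmem).symm
          · refine ⟨.inr 1, ?_⟩
            show qIdx (extR 1 (fun u => c u.1)) = c (.inr 1)
            have hext : extR 1 (fun u : KG.neighborSet (Sum.inr 1) => c u.1) = x := rfl
            rw [hext]
            exact (hq2 x _ hmem).symm
          · refine ⟨.inr 2, ?_⟩
            show rIdx (extR 2 (fun u => c u.1)) = c (.inr 2)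
            have hext : extR 2 (fun u : KG.neighborSet (Sum.inr 2) => c u.1) = x := rfl
            rw [hext]
            exact (hr2 x _ hmem).symm
        · refine ⟨.inl 2, ?_⟩
          show mC (c (.inr 0)) (c (.inr 1)) (c (.inr 2)) = c (.inl 2)
          by_contra h
          exact h3 (hmC _ _ _ _ (fun he => h he.symm))
      · refine ⟨.inl 1, ?_⟩
        show mB (c (.inr 0)) (c (.inr 1)) (c (.inr 2)) = c (.inl 1)
        by_contra h
        exact h2 (hmB _ _ _ _ (fun he => h he.symm))
    · refine ⟨.inl 0, ?_⟩
      show mA (c (.inr 0)) (c (.inr 1)) (c (.inr 2)) = c (.inl 0)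
      by_contra h
      exact h1 (hmA _ _ _ _ (fun he => h he.symm))
end

section
/- Any three 3 × 3 × 3 combinatorial cubes in (Fin 4)³ have a two-intersection of at least 20 points. -/
/-- A `2 × 3 × 3` combinatorial prism in `(Fin 4)³`: a product `A ×ˢ B ×ˢ C` whose side
sizes are `2, 3, 3` in some order. -/
def IsPrism233 (D : Finset GridPt) : Prop :=
  ∃ A B C : Finset (Fin 4),
    ({A.card, B.card, C.card} : Multiset ℕ) = ({2, 3, 3} : Multiset ℕ) ∧ D = A ×ˢ B ×ˢ C

/-- The two-intersection of a family of sets: all points lying in at least two sets of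
the family (counted with indices). -/
def twoInter {α : Type*} [Fintype α] [DecidableEq α] {n : ℕ} (S : Fin n → Finset α) :
    Finset α :=
  Finset.univ.filter (fun p => ∃ i j : Fin n, i ≠ j ∧ p ∈ S i ∧ p ∈ S j)

/-- The possible intersection-pattern vectors of three 3-subsets of `Fin 4`. -/
def patSet : Finset (ℕ × ℕ × ℕ × ℕ) :=
  {(3,3,3,3), (3,2,2,2), (2,3,2,2), (2,2,3,2), (2,2,2,1)}

lemma pat_mem : ∀ A B C : Finset (Fin 4), A.card = 3 → B.card = 3 → C.card = 3 →
    ((A ∩ B).card, (A ∩ C).card, (B ∩ C).card, (A ∩ B ∩ C).card) ∈ patSet := by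
  decide

lemma pat_ineq : ∀ u ∈ patSet, ∀ v ∈ patSet, ∀ w ∈ patSet,
    20 + 2 * (u.2.2.2 * v.2.2.2 * w.2.2.2) ≤
      u.1 * v.1 * w.1 + u.2.1 * v.2.1 * w.2.1 + u.2.2.1 * v.2.2.1 * w.2.2.1 := by
  decide

lemma prod_inter (A A' B B' D D' : Finset (Fin 4)) :
    (A ×ˢ B ×ˢ D) ∩ (A' ×ˢ B' ×ˢ D') = (A ∩ A') ×ˢ (B ∩ B') ×ˢ (D ∩ D') := by
  ext ⟨x, y, z⟩
  simp [Finset.mem_product, Finset.mem_inter]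
  tauto

/-- Three `3 × 3 × 3` cubes in `(Fin 4)³` two-intersect in at least 20 points. -/
theorem twoInter_three_cubes (C : Fin 3 → Finset GridPt) (hC : ∀ i, IsCube (C i)) :
    20 ≤ (twoInter C).card := by
  obtain ⟨A0, B0, D0, hA0, hB0, hD0, h0⟩ := hC 0
  obtain ⟨A1, B1, D1, hA1, hB1, hD1, h1⟩ := hC 1
  obtain ⟨A2, B2, D2, hA2, hB2, hD2, h2⟩ := hC 2
  set X := C 0 ∩ C 1 with hX
  set Y := C 0 ∩ C 2 with hY
  set Z := C 1 ∩ C 2 with hZ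
  set T := C 0 ∩ C 1 ∩ C 2 with hT
  have hsub : X ∪ Y ∪ Z ⊆ twoInter C := by
    intro p hp
    simp only [Finset.mem_union, hX, hY, hZ, Finset.mem_inter] at hp
    simp only [twoInter, Finset.mem_filter, Finset.mem_univ, true_and]
    rcases hp with (⟨h, h'⟩ | ⟨h, h'⟩) | ⟨h, h'⟩
    · exact ⟨0, 1, by decide, h, h'⟩
    · exact ⟨0, 2, by decide, h, h'⟩
    · exact ⟨1, 2, by decide, h, h'⟩
  have hXY : X ∩ Y = T := by
    rw [hX, hY, hT]
    ext p; simp [Finset.mem_inter]; tauto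
  have hXZ : (X ∪ Y) ∩ Z = T := by
    rw [hX, hY, hZ, hT]
    ext p; simp [Finset.mem_inter, Finset.mem_union]; tauto
  have key : (X ∪ Y ∪ Z).card + 2 * T.card = X.card + Y.card + Z.card := by
    have e1 : X.card + Y.card = (X ∪ Y).card + T.card := by
      rw [← hXY]; exact (Finset.card_union_add_card_inter X Y).symm
    have e2 : (X ∪ Y).card + Z.card = (X ∪ Y ∪ Z).card + T.card := by
      rw [← hXZ]; exact (Finset.card_union_add_card_inter (X ∪ Y) Z).symm
    omega
  -- compute the cards as products
  have cX : X.card = (A0 ∩ A1).card * ((B0 ∩ B1).card * (D0 ∩ D1).card) := by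
    rw [hX, h0, h1, prod_inter, Finset.card_product, Finset.card_product]
  have cY : Y.card = (A0 ∩ A2).card * ((B0 ∩ B2).card * (D0 ∩ D2).card) := by
    rw [hY, h0, h2, prod_inter, Finset.card_product, Finset.card_product]
  have cZ : Z.card = (A1 ∩ A2).card * ((B1 ∩ B2).card * (D1 ∩ D2).card) := by
    rw [hZ, h1, h2, prod_inter, Finset.card_product, Finset.card_product]
  have cT : T.card = (A0 ∩ A1 ∩ A2).card * ((B0 ∩ B1 ∩ B2).card * (D0 ∩ D1 ∩ D2).card) := by
    rw [hT, h0, h1, h2, prod_inter, prod_inter, Finset.card_product, Finset.card_product]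
  have hu := pat_mem A0 A1 A2 hA0 hA1 hA2
  have hv := pat_mem B0 B1 B2 hB0 hB1 hB2
  have hw := pat_mem D0 D1 D2 hD0 hD1 hD2
  have hineq := pat_ineq _ hu _ hv _ hw
  simp only at hineq
  have hfinal : 20 + 2 * T.card ≤ X.card + Y.card + Z.card := by
    rw [cX, cY, cZ, cT]
    calc 20 + 2 * ((A0 ∩ A1 ∩ A2).card * ((B0 ∩ B1 ∩ B2).card * (D0 ∩ D1 ∩ D2).card))
        = 20 + 2 * ((A0 ∩ A1 ∩ A2).card * (B0 ∩ B1 ∩ B2).card * (D0 ∩ D1 ∩ D2).card) := by ring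
      _ ≤ _ := by
          refine le_trans hineq (le_of_eq ?_)
          ring
  have := Finset.card_le_card hsub
  omega
end

section
/- There do not exist four subsets of (Fin 4)³, each of size 16 and each contained in some 2 × 3 × 3 combinatorial prism, that partition (Fin 4)³. -/
/-- helper: possible orderings of cards -/
lemma cards3 {a b c : ℕ} (h : ({a, b, c} : Multiset ℕ) = ({2, 3, 3} : Multiset ℕ)) :
    (a = 2 ∧ b = 3 ∧ c = 3) ∨ (a = 3 ∧ b = 2 ∧ c = 3) ∨ (a = 3 ∧ b = 3 ∧ c = 2) := by
  have ha : a ∈ ({2, 3, 3} : Multiset ℕ) := by rw [← h]; simp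
  have hb : b ∈ ({2, 3, 3} : Multiset ℕ) := by rw [← h]; simp
  have hc : c ∈ ({2, 3, 3} : Multiset ℕ) := by rw [← h]; simp
  simp at ha hb hc
  rcases ha with rfl | rfl <;> rcases hb with rfl | rfl <;> rcases hc with rfl | rfl <;>
    revert h <;> decide

/-- the slice weight function -/
def wgt (E F G : Fin 4 → Finset (Fin 4)) (i s : Fin 4) : ℕ :=
  if s ∈ E i then (F i).card * (G i).card else 0

lemma mul9 {a b : ℕ} (ha : a ≤ 3) (hb : b ≤ 3) (h : a * b = 9) : a = 3 ∧ b = 3 := by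
  interval_cases a <;> interval_cases b <;> omega

lemma key (E F G : Fin 4 → Finset (Fin 4))
    (hE : ∀ i, (E i).card = 2 ∨ (E i).card = 3)
    (hF : ∀ i, (F i).card ≤ 3) (hG : ∀ i, (G i).card ≤ 3)
    (hprod : ∀ i, (E i).card * ((F i).card * (G i).card) = 18)
    (hcov : ∀ s y z : Fin 4, ∃ i, s ∈ E i ∧ y ∈ F i ∧ z ∈ G i)
    (h0 : (E 0).card = 2) : False := by
  have h4 : ∀ m : Fin 4, m = 0 ∨ m = 1 ∨ m = 2 ∨ m = 3 := by decide
  -- structure of each prism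
  have hFG : ∀ i, ((E i).card = 2 ∧ (F i).card = 3 ∧ (G i).card = 3) ∨
      ((E i).card = 3 ∧ (F i).card * (G i).card = 6) := by
    intro i
    rcases hE i with h2 | h3
    · left
      have hp := hprod i
      rw [h2] at hp
      have h9 : (F i).card * (G i).card = 9 := by
        generalize (F i).card * (G i).card = q at hp ⊢; omega
      exact ⟨h2, mul9 (hF i) (hG i) h9⟩
    · right
      have hp := hprod i
      rw [h3] at hp
      have h6 : (F i).card * (G i).card = 6 := by
        generalize (F i).card * (G i).card = q at hp ⊢; omega
      exact ⟨h3, h6⟩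
  have hterm : ∀ i s, wgt E F G i s = 0 ∨ wgt E F G i s = 6 ∨ wgt E F G i s = 9 := by
    intro i s
    by_cases hs : s ∈ E i
    · rcases hFG i with ⟨-, hf, hg⟩ | ⟨-, hfg⟩
      · right; right; simp [wgt, hs, hf, hg]
      · right; left; simp [wgt, hs, hfg]
    · left; simp [wgt, hs]
  -- each prism has total weight 18 over slices
  have hsum18 : ∀ i, ∑ s, wgt E F G i s = 18 := by
    intro i
    have : ∑ s, wgt E F G i s = (E i).card * ((F i).card * (G i).card) := by
      simp [wgt, Finset.sum_ite_mem, Finset.univ_inter, Finset.sum_const, smul_eq_mul]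
    rw [this, hprod i]
  have htot : ∑ s : Fin 4, ∑ i : Fin 4, wgt E F G i s = 72 := by
    rw [Finset.sum_comm]
    simp [hsum18]
  -- coverage gives at least 16 per slice
  have hcov16 : ∀ s : Fin 4, 16 ≤ ∑ i, wgt E F G i s := by
    intro s
    have hsub : (Finset.univ : Finset (Fin 4 × Fin 4)) ⊆
        Finset.univ.biUnion (fun i => if s ∈ E i then F i ×ˢ G i else ∅) := by
      intro p _
      obtain ⟨i, h1, h2, h3⟩ := hcov s p.1 p.2
      exact Finset.mem_biUnion.mpr ⟨i, Finset.mem_univ i, by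
        rw [if_pos h1]; exact Finset.mem_product.mpr ⟨h2, h3⟩⟩
    have h1 := Finset.card_le_card hsub
    have h2 := Finset.card_biUnion_le (s := (Finset.univ : Finset (Fin 4)))
      (t := fun i => if s ∈ E i then F i ×ˢ G i else ∅)
    have hcards : ∀ i : Fin 4, (if s ∈ E i then F i ×ˢ G i else ∅).card = wgt E F G i s := by
      intro i
      by_cases hs : s ∈ E i
      · simp [hs, wgt, Finset.card_product]
      · simp [hs, wgt]
    have hcu : (Finset.univ : Finset (Fin 4 × Fin 4)).card = 16 := by decide
    calc 16 = (Finset.univ : Finset (Fin 4 × Fin 4)).card := hcu.symm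
      _ ≤ (Finset.univ.biUnion (fun i => if s ∈ E i then F i ×ˢ G i else ∅)).card := h1
      _ ≤ ∑ i, (if s ∈ E i then F i ×ˢ G i else ∅).card := h2
      _ = ∑ i, wgt E F G i s := Finset.sum_congr rfl (fun i _ => hcards i)
  -- hence at least 18 per slice
  have lower : ∀ s : Fin 4, 18 ≤ ∑ i, wgt E F G i s := by
    intro s
    have h16 := hcov16 s
    have e : ∑ i, wgt E F G i s
        = wgt E F G 0 s + wgt E F G 1 s + wgt E F G 2 s + wgt E F G 3 s := by
      simp [Fin.sum_univ_four]
    rw [e] at h16 ⊢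
    rcases hterm 0 s with a | a | a <;> rcases hterm 1 s with b | b | b <;>
      rcases hterm 2 s with c | c | c <;> rcases hterm 3 s with d | d | d <;> omega
  -- pick a slice where prism 0 has a 9-window
  obtain ⟨s0, hs0⟩ := Finset.card_pos.mp (by omega : 0 < (E 0).card)
  have hNs : ∑ i, wgt E F G i s0 = 18 := by
    refine le_antisymm ?_ (lower s0)
    by_contra hgt
    push_neg at hgt
    have hlt : ∑ _s : Fin 4, (18 : ℕ) < ∑ s : Fin 4, ∑ i, wgt E F G i s :=
      Finset.sum_lt_sum (fun s _ => lower s) ⟨s0, Finset.mem_univ _, hgt⟩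
    rw [htot] at hlt
    simp at hlt
  have h90 : wgt E F G 0 s0 = 9 := by
    rcases hFG 0 with ⟨-, hf, hg⟩ | ⟨h3, -⟩
    · simp [wgt, hs0, hf, hg]
    · omega
  have hsum4 : wgt E F G 0 s0 + wgt E F G 1 s0 + wgt E F G 2 s0 + wgt E F G 3 s0 = 18 := by
    have := hNs
    simp [Fin.sum_univ_four] at this
    omega
  -- the final contradiction engine
  have final : ∀ j : Fin 4, wgt E F G j s0 = 9 →
      (∀ k : Fin 4, s0 ∈ E k → k = 0 ∨ k = j) → False := by
    intro j hj9 honly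
    have hsj : s0 ∈ E j := by
      by_contra hne
      simp [wgt, hne] at hj9
    have hprod9 : (F j).card * (G j).card = 9 := by simpa [wgt, hsj] using hj9
    have hF0 : (F 0).card = 3 := by
      rcases hFG 0 with ⟨-, hf, -⟩ | ⟨h3, -⟩
      · exact hf
      · omega
    have hGj : (G j).card = 3 := by
      rcases hFG j with ⟨-, -, hg⟩ | ⟨-, h6⟩
      · exact hg
      · omega
    obtain ⟨y, hy⟩ : ∃ y, y ∉ F 0 := by
      by_contra hcon
      push_neg at hcon
      have : F 0 = Finset.univ := Finset.eq_univ_iff_forall.mpr hcon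
      rw [this] at hF0
      simp at hF0
    obtain ⟨z, hz⟩ : ∃ z, z ∉ G j := by
      by_contra hcon
      push_neg at hcon
      have : G j = Finset.univ := Finset.eq_univ_iff_forall.mpr hcon
      rw [this] at hGj
      simp at hGj
    obtain ⟨i, hiE, hiF, hiG⟩ := hcov s0 y z
    rcases honly i hiE with rfl | rfl
    · exact hy hiF
    · exact hz hiG
  have hnz : ∀ k : Fin 4, s0 ∈ E k → wgt E F G k s0 ≠ 0 := by
    intro k hk hzero
    rcases hFG k with ⟨-, hf, hg⟩ | ⟨-, h6⟩
    · simp [wgt, hk, hf, hg] at hzero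
    · rw [wgt, if_pos hk, h6] at hzero
      exact absurd hzero (by norm_num)
  have hpat : (wgt E F G 1 s0 = 9 ∧ wgt E F G 2 s0 = 0 ∧ wgt E F G 3 s0 = 0) ∨
      (wgt E F G 2 s0 = 9 ∧ wgt E F G 1 s0 = 0 ∧ wgt E F G 3 s0 = 0) ∨
      (wgt E F G 3 s0 = 9 ∧ wgt E F G 1 s0 = 0 ∧ wgt E F G 2 s0 = 0) := by
    rcases hterm 1 s0 with b | b | b <;> rcases hterm 2 s0 with c | c | c <;>
      rcases hterm 3 s0 with d | d | d <;> omega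
  rcases hpat with ⟨hj, hk, hl⟩ | ⟨hj, hk, hl⟩ | ⟨hj, hk, hl⟩
  · refine final 1 hj ?_
    intro k hkE
    rcases h4 k with rfl | rfl | rfl | rfl
    · left; rfl
    · right; rfl
    · exact absurd hk (hnz _ hkE)
    · exact absurd hl (hnz _ hkE)
  · refine final 2 hj ?_
    intro k hkE
    rcases h4 k with rfl | rfl | rfl | rfl
    · left; rfl
    · exact absurd hk (hnz _ hkE)
    · right; rfl
    · exact absurd hl (hnz _ hkE)
  · refine final 3 hj ?_
    intro k hkE
    rcases h4 k with rfl | rfl | rfl | rfl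
    · left; rfl
    · exact absurd hk (hnz _ hkE)
    · exact absurd hl (hnz _ hkE)
    · right; rfl

/-- Four 16-element sets, each contained in a `2 × 3 × 3` combinatorial prism, cannot
partition `(Fin 4)³`. -/
theorem no_four_prism_partition :
    ¬ ∃ P : Fin 4 → Finset GridPt,
        (∀ m, (P m).card = 16) ∧
        (∀ m, ∃ D : Finset GridPt, IsPrism233 D ∧ P m ⊆ D) ∧
        (∀ x : GridPt, ∃! m, x ∈ P m) := by
  rintro ⟨P, -, hp, hpart⟩
  choose D hD hPD using hp
  choose A B C hmult hprodD using hD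
  have hcov : ∀ x : GridPt, ∃ m, x.1 ∈ A m ∧ x.2.1 ∈ B m ∧ x.2.2 ∈ C m := by
    intro x
    obtain ⟨m, hm, -⟩ := hpart x
    refine ⟨m, ?_⟩
    have hx := hPD m hm
    rw [hprodD m] at hx
    simpa [Finset.mem_product] using hx
  have hcases : ∀ m, ((A m).card = 2 ∧ (B m).card = 3 ∧ (C m).card = 3) ∨
      ((A m).card = 3 ∧ (B m).card = 2 ∧ (C m).card = 3) ∨
      ((A m).card = 3 ∧ (B m).card = 3 ∧ (C m).card = 2) := fun m => cards3 (hmult m)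
  rcases hcases 0 with ⟨h1, h2, h3⟩ | ⟨h1, h2, h3⟩ | ⟨h1, h2, h3⟩
  · exact key A B C
      (fun i => by rcases hcases i with ⟨h, _, _⟩ | ⟨h, _, _⟩ | ⟨h, _, _⟩ <;> simp [h])
      (fun i => by rcases hcases i with ⟨_, h, _⟩ | ⟨_, h, _⟩ | ⟨_, h, _⟩ <;> simp [h])
      (fun i => by rcases hcases i with ⟨_, _, h⟩ | ⟨_, _, h⟩ | ⟨_, _, h⟩ <;> simp [h])
      (fun i => by rcases hcases i with ⟨ha, hb, hc⟩ | ⟨ha, hb, hc⟩ | ⟨ha, hb, hc⟩ <;>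
        rw [ha, hb, hc])
      (fun s y z => hcov (s, y, z)) h1
  · exact key B A C
      (fun i => by rcases hcases i with ⟨_, h, _⟩ | ⟨_, h, _⟩ | ⟨_, h, _⟩ <;> simp [h])
      (fun i => by rcases hcases i with ⟨h, _, _⟩ | ⟨h, _, _⟩ | ⟨h, _, _⟩ <;> simp [h])
      (fun i => by rcases hcases i with ⟨_, _, h⟩ | ⟨_, _, h⟩ | ⟨_, _, h⟩ <;> simp [h])
      (fun i => by rcases hcases i with ⟨ha, hb, hc⟩ | ⟨ha, hb, hc⟩ | ⟨ha, hb, hc⟩ <;>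
        rw [ha, hb, hc])
      (fun s y z => by obtain ⟨m, hm1, hm2, hm3⟩ := hcov (y, s, z); exact ⟨m, hm2, hm1, hm3⟩) h2
  · exact key C A B
      (fun i => by rcases hcases i with ⟨_, _, h⟩ | ⟨_, _, h⟩ | ⟨_, _, h⟩ <;> simp [h])
      (fun i => by rcases hcases i with ⟨h, _, _⟩ | ⟨h, _, _⟩ | ⟨h, _, _⟩ <;> simp [h])
      (fun i => by rcases hcases i with ⟨_, h, _⟩ | ⟨_, h, _⟩ | ⟨_, h, _⟩ <;> simp [h])
      (fun i => by rcases hcases i with ⟨ha, hb, hc⟩ | ⟨ha, hb, hc⟩ | ⟨ha, hb, hc⟩ <;>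
        rw [ha, hb, hc])
      (fun s y z => by obtain ⟨m, hm1, hm2, hm3⟩ := hcov (y, z, s); exact ⟨m, hm3, hm1, hm2⟩) h3
end

section
/- Three 3 × 3 × 3 combinatorial cubes together with one 2 × 3 × 3 combinatorial prism cannot cover (Fin 4)³: for any three 3 × 3 × 3 combinatorial cubes C_1, C_2, C_3 and any 2 × 3 × 3 combinatorial prism P in (Fin 4)³, the union C_1 ∪ C_2 ∪ C_3 ∪ P is a proper subset of (Fin 4)³. -/
lemma compl3 (A : Finset (Fin 4)) (h : A.card = 3) : ∃ a, ∀ x, x ∈ A ↔ x ≠ a := by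
  have hc : Aᶜ.card = 1 := by rw [Finset.card_compl, h]; rfl
  obtain ⟨a, ha⟩ := Finset.card_eq_one.mp hc
  refine ⟨a, fun x => ?_⟩
  have h2 : x ∈ Aᶜ ↔ x ∉ A := Finset.mem_compl
  rw [ha] at h2
  simp only [Finset.mem_singleton] at h2
  tauto

lemma compl2 (A : Finset (Fin 4)) (h : A.card = 2) :
    ∃ p q, p ≠ q ∧ ∀ x, x ∈ A ↔ (x ≠ p ∧ x ≠ q) := by
  have hc : Aᶜ.card = 2 := by rw [Finset.card_compl, h]; rfl
  obtain ⟨p, q, hpq, ha⟩ := Finset.card_eq_two.mp hc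
  refine ⟨p, q, hpq, fun x => ?_⟩
  have h2 : x ∈ Aᶜ ↔ x ∉ A := Finset.mem_compl
  rw [ha] at h2
  simp only [Finset.mem_insert, Finset.mem_singleton] at h2
  tauto

lemma key_s12 (a₁ b₁ c₁ a₂ b₂ c₂ a₃ b₃ c₃ p q b c : Fin 4) (hpq : p ≠ q) :
    ∃ x y z : Fin 4,
      (x = a₁ ∨ y = b₁ ∨ z = c₁) ∧ (x = a₂ ∨ y = b₂ ∨ z = c₂) ∧
      (x = a₃ ∨ y = b₃ ∨ z = c₃) ∧ (x = p ∨ x = q ∨ y = b ∨ z = c) := by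
  by_cases h1 : b = b₁
  · exact ⟨a₂, b, c₃, by tauto⟩
  by_cases h2 : b = b₂
  · exact ⟨a₁, b, c₃, by tauto⟩
  by_cases h3 : b = b₃
  · exact ⟨a₁, b, c₂, by tauto⟩
  by_cases h12 : a₁ = a₂
  · exact ⟨a₁, b, c₃, by tauto⟩
  by_cases h13 : a₁ = a₃
  · exact ⟨a₁, b, c₂, by tauto⟩
  by_cases h23 : a₂ = a₃
  · exact ⟨a₂, b, c₁, by tauto⟩
  have hhit : p = a₁ ∨ p = a₂ ∨ p = a₃ ∨ q = a₁ ∨ q = a₂ ∨ q = a₃ := by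
    have h : ∀ p q a₁ a₂ a₃ : Fin 4, p ≠ q → a₁ ≠ a₂ → a₁ ≠ a₃ → a₂ ≠ a₃ →
        (p = a₁ ∨ p = a₂ ∨ p = a₃ ∨ q = a₁ ∨ q = a₂ ∨ q = a₃) := by decide
    exact h p q a₁ a₂ a₃ hpq h12 h13 h23
  rcases hhit with h|h|h|h|h|h
  · exact ⟨p, b₂, c₃, by tauto⟩
  · exact ⟨p, b₁, c₃, by tauto⟩
  · exact ⟨p, b₁, c₂, by tauto⟩
  · exact ⟨q, b₂, c₃, by tauto⟩
  · exact ⟨q, b₁, c₃, by tauto⟩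
  · exact ⟨q, b₁, c₂, by tauto⟩


lemma notcover (C₁ C₂ C₃ P : Finset GridPt)
    (h₁ : IsCube C₁) (h₂ : IsCube C₂) (h₃ : IsCube C₃) (hP : IsPrism233 P) :
    ∃ v : GridPt, v ∉ C₁ ∪ C₂ ∪ C₃ ∪ P := by
  obtain ⟨A₁, B₁, D₁, hA₁, hB₁, hD₁, rfl⟩ := h₁
  obtain ⟨A₂, B₂, D₂, hA₂, hB₂, hD₂, rfl⟩ := h₂
  obtain ⟨A₃, B₃, D₃, hA₃, hB₃, hD₃, rfl⟩ := h₃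
  obtain ⟨A, B, D, hcard, rfl⟩ := hP
  obtain ⟨a₁, ha₁⟩ := compl3 A₁ hA₁
  obtain ⟨b₁, hb₁⟩ := compl3 B₁ hB₁
  obtain ⟨c₁, hc₁⟩ := compl3 D₁ hD₁
  obtain ⟨a₂, ha₂⟩ := compl3 A₂ hA₂
  obtain ⟨b₂, hb₂⟩ := compl3 B₂ hB₂
  obtain ⟨c₂, hc₂⟩ := compl3 D₂ hD₂
  obtain ⟨a₃, ha₃⟩ := compl3 A₃ hA₃
  obtain ⟨b₃, hb₃⟩ := compl3 B₃ hB₃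
  obtain ⟨c₃, hc₃⟩ := compl3 D₃ hD₃
  have mA : A.card = 2 ∨ A.card = 3 := by
    have : A.card ∈ ({2, 3, 3} : Multiset ℕ) := by rw [← hcard]; simp
    simpa using this
  have mB : B.card = 2 ∨ B.card = 3 := by
    have : B.card ∈ ({2, 3, 3} : Multiset ℕ) := by rw [← hcard]; simp
    simpa using this
  have mD : D.card = 2 ∨ D.card = 3 := by
    have : D.card ∈ ({2, 3, 3} : Multiset ℕ) := by rw [← hcard]; simp
    simpa using this
  have hsum : A.card + B.card + D.card = 8 := by
    have := congrArg Multiset.sum hcard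
    simpa [add_assoc] using this
  have hcase : (A.card = 2 ∧ B.card = 3 ∧ D.card = 3) ∨
      (A.card = 3 ∧ B.card = 2 ∧ D.card = 3) ∨
      (A.card = 3 ∧ B.card = 3 ∧ D.card = 2) := by omega
  rcases hcase with ⟨hA, hB, hD⟩ | ⟨hA, hB, hD⟩ | ⟨hA, hB, hD⟩
  · obtain ⟨p, q, hpq, h2c⟩ := compl2 A hA
    obtain ⟨bb, hbb⟩ := compl3 B hB
    obtain ⟨cc, hcc⟩ := compl3 D hD
    obtain ⟨x, y, z, k₁, k₂, k₃, k₄⟩ :=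
      key_s12 a₁ b₁ c₁ a₂ b₂ c₂ a₃ b₃ c₃ p q bb cc hpq
    refine ⟨(x, y, z), ?_⟩
    intro hmem
    simp only [Finset.mem_union, Finset.mem_product] at hmem
    obtain (((⟨u1, u2, u3⟩|⟨u1, u2, u3⟩)|⟨u1, u2, u3⟩)|⟨u1, u2, u3⟩) := hmem
    · rcases k₁ with e|e|e
      · exact (ha₁ x).mp u1 e
      · exact (hb₁ y).mp u2 e
      · exact (hc₁ z).mp u3 e
    · rcases k₂ with e|e|e
      · exact (ha₂ x).mp u1 e
      · exact (hb₂ y).mp u2 e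
      · exact (hc₂ z).mp u3 e
    · rcases k₃ with e|e|e
      · exact (ha₃ x).mp u1 e
      · exact (hb₃ y).mp u2 e
      · exact (hc₃ z).mp u3 e
    · rcases k₄ with e|e|e|e
      · exact ((h2c x).mp u1).1 e
      · exact ((h2c x).mp u1).2 e
      · exact (hbb y).mp u2 e
      · exact (hcc z).mp u3 e
  · obtain ⟨p, q, hpq, h2c⟩ := compl2 B hB
    obtain ⟨aa, haa⟩ := compl3 A hA
    obtain ⟨cc, hcc⟩ := compl3 D hD
    obtain ⟨y, x, z, k₁, k₂, k₃, k₄⟩ :=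
      key_s12 b₁ a₁ c₁ b₂ a₂ c₂ b₃ a₃ c₃ p q aa cc hpq
    refine ⟨(x, y, z), ?_⟩
    intro hmem
    simp only [Finset.mem_union, Finset.mem_product] at hmem
    obtain (((⟨u1, u2, u3⟩|⟨u1, u2, u3⟩)|⟨u1, u2, u3⟩)|⟨u1, u2, u3⟩) := hmem
    · rcases k₁ with e|e|e
      · exact (hb₁ y).mp u2 e
      · exact (ha₁ x).mp u1 e
      · exact (hc₁ z).mp u3 e
    · rcases k₂ with e|e|e
      · exact (hb₂ y).mp u2 e
      · exact (ha₂ x).mp u1 e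
      · exact (hc₂ z).mp u3 e
    · rcases k₃ with e|e|e
      · exact (hb₃ y).mp u2 e
      · exact (ha₃ x).mp u1 e
      · exact (hc₃ z).mp u3 e
    · rcases k₄ with e|e|e|e
      · exact ((h2c y).mp u2).1 e
      · exact ((h2c y).mp u2).2 e
      · exact (haa x).mp u1 e
      · exact (hcc z).mp u3 e
  · obtain ⟨p, q, hpq, h2c⟩ := compl2 D hD
    obtain ⟨aa, haa⟩ := compl3 A hA
    obtain ⟨bb, hbb⟩ := compl3 B hB
    obtain ⟨z, x, y, k₁, k₂, k₃, k₄⟩ :=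
      key_s12 c₁ a₁ b₁ c₂ a₂ b₂ c₃ a₃ b₃ p q aa bb hpq
    refine ⟨(x, y, z), ?_⟩
    intro hmem
    simp only [Finset.mem_union, Finset.mem_product] at hmem
    obtain (((⟨u1, u2, u3⟩|⟨u1, u2, u3⟩)|⟨u1, u2, u3⟩)|⟨u1, u2, u3⟩) := hmem
    · rcases k₁ with e|e|e
      · exact (hc₁ z).mp u3 e
      · exact (ha₁ x).mp u1 e
      · exact (hb₁ y).mp u2 e
    · rcases k₂ with e|e|e
      · exact (hc₂ z).mp u3 e
      · exact (ha₂ x).mp u1 e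
      · exact (hb₂ y).mp u2 e
    · rcases k₃ with e|e|e
      · exact (hc₃ z).mp u3 e
      · exact (ha₃ x).mp u1 e
      · exact (hb₃ y).mp u2 e
    · rcases k₄ with e|e|e|e
      · exact ((h2c z).mp u3).1 e
      · exact ((h2c z).mp u3).2 e
      · exact (haa x).mp u1 e
      · exact (hbb y).mp u2 e

/-- Three `3 × 3 × 3` cubes and one `2 × 3 × 3` prism cannot cover `(Fin 4)³`. -/
theorem three_cubes_one_prism_no_cover (C₁ C₂ C₃ P : Finset GridPt)
    (h₁ : IsCube C₁) (h₂ : IsCube C₂) (h₃ : IsCube C₃) (hP : IsPrism233 P) :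
    C₁ ∪ C₂ ∪ C₃ ∪ P ⊂ Finset.univ := by

  obtain ⟨v, hv⟩ := notcover C₁ C₂ C₃ P h₁ h₂ h₃ hP
  rw [Finset.ssubset_univ_iff]
  intro h
  exact hv (h ▸ Finset.mem_univ v)
end

section
/- For q ≥ n ≥ 1, the maximum size of a solvable set of the complete graph K_n with q colors equals n·q^{n−1}; that is, every solvable set S ⊆ (Fin n → Fin q) satisfies |S| ≤ n·q^{n−1}, and there exists a solvable set of size exactly n·q^{n−1}. -/
/-- `S` is a solvable set of hat assignments for the hat-guessing game on `K_n` with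
`q` colors: there are guessing functions, one for each vertex, each depending only on the
other vertices' colors, such that on every assignment in `S` some vertex guesses right. -/
def SolvableSet (n q : ℕ) (S : Finset (Fin n → Fin q)) : Prop :=
  ∃ f : ∀ i : Fin n, ({j : Fin n // j ≠ i} → Fin q) → Fin q,
    ∀ x ∈ S, ∃ i : Fin n, f i (fun j => x j.1) = x i

theorem aux_card_fun (n q : ℕ) (i : Fin n) :
    Fintype.card ({j : Fin n // j ≠ i} → Fin q) = q ^ (n - 1) := by
  rw [Fintype.card_fun, Fintype.card_fin]
  congr 1
  rw [Fintype.card_subtype_compl, Fintype.card_subtype_eq, Fintype.card_fin]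

theorem aux_sum_split {n : ℕ} (i : Fin n) {M : Type} [AddCommMonoid M] (x : Fin n → M) :
    ∑ j, x j = x i + ∑ k : {j : Fin n // j ≠ i}, x k.1 := by
  rw [← Finset.sum_subtype (Finset.univ.erase i) (by simp) (fun j => x j)]
  rw [Finset.add_sum_erase _ _ (Finset.mem_univ i)]

/-- For `q ≥ n ≥ 1`, the largest solvable set of `K_n` with `q` colors has size
exactly `n * q^(n-1)`. -/
theorem max_solvable_set (n q : ℕ) (hn : 1 ≤ n) (hq : n ≤ q) :
    (∀ S : Finset (Fin n → Fin q), SolvableSet n q S → S.card ≤ n * q ^ (n - 1)) ∧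
    (∃ S : Finset (Fin n → Fin q), SolvableSet n q S ∧ S.card = n * q ^ (n - 1)) := by
  haveI : NeZero q := ⟨by omega⟩
  classical
  constructor
  · rintro S ⟨f, hf⟩
    have hsub : S ⊆ Finset.univ.biUnion
        (fun i : Fin n => S.filter (fun x => f i (fun j => x j.1) = x i)) := by
      intro x hx
      obtain ⟨i, hi⟩ := hf x hx
      exact Finset.mem_biUnion.2 ⟨i, Finset.mem_univ i, Finset.mem_filter.2 ⟨hx, hi⟩⟩
    calc S.card ≤ (Finset.univ.biUnion
          (fun i : Fin n => S.filter (fun x => f i (fun j => x j.1) = x i))).card :=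
            Finset.card_le_card hsub
      _ ≤ ∑ i : Fin n, (S.filter (fun x => f i (fun j => x j.1) = x i)).card :=
            Finset.card_biUnion_le
      _ ≤ ∑ _i : Fin n, q ^ (n - 1) := by
            apply Finset.sum_le_sum
            intro i _
            rw [← aux_card_fun n q i, ← Finset.card_univ]
            apply Finset.card_le_card_of_injOn (fun x => fun j : {j : Fin n // j ≠ i} => x j.1)
              (fun _ _ => Finset.mem_univ _)
            intro x hx y hy hxy
            simp only [Finset.mem_coe, Finset.mem_filter] at hx hy
            funext j
            by_cases hji : j = i
            · subst hji
              rw [← hx.2, ← hy.2]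
              exact congrArg (f j) hxy
            · exact congrFun hxy ⟨j, hji⟩
      _ = n * q ^ (n - 1) := by simp [Finset.sum_const, Finset.card_univ]
  · set i0 : Fin n := ⟨0, hn⟩ with hi0
    set ext : Fin q → ({j : Fin n // j ≠ i0} → Fin q) → (Fin n → Fin q) :=
      fun c g j => if h : j = i0 then c - ∑ k, g k else g ⟨j, h⟩ with hext
    have sumA : ∀ c g, ∑ j, ext c g j = c := by
      intro c g
      rw [aux_sum_split i0 (ext c g)]
      have h1 : ext c g i0 = c - ∑ k, g k := by simp [hext]
      have h2 : ∀ k : {j : Fin n // j ≠ i0}, ext c g k.1 = g k := by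
        intro k; simp [hext, k.2]
      rw [h1, Finset.sum_congr rfl (fun k _ => h2 k)]
      abel
    set Ψ : Fin n × ({j : Fin n // j ≠ i0} → Fin q) → (Fin n → Fin q) :=
      fun p => ext (Fin.castLE hq p.1) p.2 with hΨ
    have hΨinj : Function.Injective Ψ := by
      rintro ⟨a, g⟩ ⟨b, g'⟩ h
      have hc : Fin.castLE hq a = Fin.castLE hq b := by
        rw [← sumA (Fin.castLE hq a) g, ← sumA (Fin.castLE hq b) g']
        exact Finset.sum_congr rfl (fun j _ => congrFun h j)
      have hab : a = b := by
        have := congrArg Fin.val hc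
        simp only [Fin.coe_castLE] at this
        exact Fin.ext this
      subst hab
      have hg : g = g' := by
        funext k
        have := congrFun h k.1
        simpa [hΨ, hext, k.2] using this
      rw [hg]
    refine ⟨Finset.image Ψ Finset.univ, ?_, ?_⟩
    · refine ⟨fun i g => Fin.castLE hq i - ∑ k, g k, ?_⟩
      intro x hx
      obtain ⟨p, _, hp⟩ := Finset.mem_image.1 hx
      refine ⟨p.1, ?_⟩
      have hsum : ∑ j, x j = Fin.castLE hq p.1 := by
        rw [← hp]; exact sumA _ _
      rw [aux_sum_split p.1 x] at hsum
      have : Fin.castLE hq p.1 - ∑ k : {j : Fin n // j ≠ p.1}, x k.1 = x p.1 := by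
        rw [← hsum]; abel
      simpa using this
    · rw [Finset.card_image_of_injective _ hΨinj, Finset.card_univ, Fintype.card_prod,
        Fintype.card_fin, aux_card_fun n q i0]
end

section
/- For all n ≥ 1 and d ≥ 2, there exist n sets A_1, …, A_n ⊆ ℤ/d^nℤ, each of size d^{n−1}, that form a difference-disjoint collection. -/
open Pointwise

/-- For all `n ≥ 1` and `d ≥ 2`, there is a difference-disjoint collection of `n` subsets
`A 0, …, A (n-1)` of `ℤ/d^nℤ`, each of size `d^(n-1)`: the difference sets `A i - A i`
intersect exactly in `{0}`. -/
theorem exists_difference_disjoint (n d : ℕ) (hn : 1 ≤ n) (hd : 2 ≤ d) :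
    ∃ A : Fin n → Finset (ZMod (d ^ n)),
      (∀ i, (A i).card = d ^ (n - 1)) ∧
      (∀ x : ZMod (d ^ n), (∀ i, x ∈ A i - A i) ↔ x = 0) := by
  have hd0 : 0 < d := by omega
  have hdn : 0 < d ^ n := pow_pos hd0 n
  haveI : NeZero (d ^ n) := ⟨hdn.ne'⟩
  -- digit-insertion map: insert a zero digit at position `i` in base `d`
  set g : ℕ → ℕ → ℕ := fun i k => k % d ^ i + d ^ (i + 1) * (k / d ^ i) with hgdef
  have hgmod : ∀ i k, g i k % d ^ (i + 1) = k % d ^ i := by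
    intro i k
    have h1 : k % d ^ i < d ^ (i + 1) := lt_of_lt_of_le (Nat.mod_lt _ (pow_pos hd0 i))
      (Nat.pow_le_pow_right hd0 (by omega))
    simp only [hgdef]
    rw [Nat.add_mul_mod_self_left, Nat.mod_eq_of_lt h1]
  have hgdiv : ∀ i k, g i k / d ^ (i + 1) = k / d ^ i := by
    intro i k
    have h1 : k % d ^ i < d ^ (i + 1) := lt_of_lt_of_le (Nat.mod_lt _ (pow_pos hd0 i))
      (Nat.pow_le_pow_right hd0 (by omega))
    simp only [hgdef]
    rw [Nat.add_mul_div_left _ _ (pow_pos hd0 (i + 1)), Nat.div_eq_of_lt h1, Nat.zero_add]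
  have hglt : ∀ i k, i < n → k < d ^ (n - 1) → g i k < d ^ n := by
    intro i k hi hk
    have h1 : k % d ^ i < d ^ i := Nat.mod_lt _ (pow_pos hd0 i)
    have h2 : k / d ^ i < d ^ (n - 1 - i) := by
      rw [Nat.div_lt_iff_lt_mul (pow_pos hd0 i), ← pow_add]
      have h3 : n - 1 - i + i = n - 1 := by omega
      rw [h3]; exact hk
    have hD : 1 ≤ d ^ (n - 1 - i) := Nat.one_le_pow _ _ hd0
    have e : d ^ (i + 1) * d ^ (n - 1 - i) = d ^ n := by
      rw [← pow_add]; congr 1; omega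
    have hmul : d ^ (i + 1) * (d ^ (n - 1 - i) - 1) + d ^ (i + 1) = d ^ (i + 1) * d ^ (n - 1 - i) := by
      rw [Nat.mul_sub_one]
      have := Nat.le_mul_of_pos_right (d ^ (i + 1)) (by omega : 0 < d ^ (n - 1 - i))
      omega
    have hle : d ^ (i + 1) * (k / d ^ i) ≤ d ^ (i + 1) * (d ^ (n - 1 - i) - 1) :=
      Nat.mul_le_mul_left _ (by omega)
    have hii : d ^ i ≤ d ^ (i + 1) := Nat.pow_le_pow_right hd0 (by omega)
    simp only [hgdef]
    omega
  refine ⟨fun i => Finset.image (fun k : Fin (d ^ (n - 1)) => ((g i k : ℕ) : ZMod (d ^ n)))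
      Finset.univ, ?_, ?_⟩
  · intro i
    rw [Finset.card_image_of_injective _ ?_, Finset.card_univ, Fintype.card_fin]
    intro k k' hkk
    replace hkk : ((g i k : ℕ) : ZMod (d ^ n)) = ((g i k' : ℕ) : ZMod (d ^ n)) := hkk
    have hv : ∀ m : Fin (d ^ (n - 1)),
        (((g i m : ℕ) : ZMod (d ^ n))).val = g i m := fun m =>
      ZMod.val_cast_of_lt (hglt i m i.2 m.2)
    have heq : g i (k : ℕ) = g i (k' : ℕ) := by
      rw [← hv k, ← hv k', hkk]
    have hrec : ∀ m : ℕ, m % d ^ (i : ℕ) + d ^ (i : ℕ) * (m / d ^ (i : ℕ)) = m :=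
      fun m => Nat.mod_add_div m _
    have h1 := hgmod i k
    have h2 := hgmod i k'
    have h3 := hgdiv i k
    have h4 := hgdiv i k'
    have : (k : ℕ) = (k' : ℕ) := by
      rw [← hrec (k : ℕ), ← hrec (k' : ℕ), ← h1, ← h2, ← h3, ← h4, heq]
    exact Fin.ext this
  · intro x
    constructor
    · intro hx
      by_contra hx0
      set v := x.val with hvdef
      have hv0 : v ≠ 0 := fun h => hx0 (by rwa [← ZMod.val_eq_zero])
      have hvn : v < d ^ n := ZMod.val_lt x
      have hex : ∃ j, ¬ d ^ (j + 1) ∣ v := by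
        refine ⟨n - 1, ?_⟩
        have : n - 1 + 1 = n := by omega
        rw [this]
        exact fun h => absurd (Nat.le_of_dvd (by omega) h) (not_le.2 hvn)
      set i := Nat.find hex with hidef
      have hi1 : ¬ d ^ (i + 1) ∣ v := Nat.find_spec hex
      have hile : i ≤ n - 1 := Nat.find_min' hex (by
        have : n - 1 + 1 = n := by omega
        rw [this]
        exact fun h => absurd (Nat.le_of_dvd (by omega) h) (not_le.2 hvn))
      have hilt : i < n := by omega
      have hdvd : d ^ i ∣ v := by
        rcases Nat.eq_zero_or_pos i with h0 | h0
        · simp [h0]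
        · have := Nat.find_min hex (show i - 1 < i by omega)
          rw [not_not] at this
          have he : i - 1 + 1 = i := by omega
          rwa [he] at this
      set c := v / d ^ i % d with hcdef
      have hclt : c < d := Nat.mod_lt _ hd0
      have hc0 : c ≠ 0 := by
        intro hc
        apply hi1
        rw [pow_succ]
        rw [← Nat.dvd_div_iff_mul_dvd hdvd]
        exact Nat.dvd_of_mod_eq_zero hc
      have hvmod : v % d ^ (i + 1) = d ^ i * c := by
        conv_lhs => rw [← Nat.div_mul_cancel hdvd]
        rw [pow_succ, Nat.mul_comm (v / d ^ i) (d ^ i), Nat.mul_mod_mul_left]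
      -- extract membership for index i
      obtain ⟨a, ha, b, hb, hab⟩ := Finset.mem_sub.1 (hx ⟨i, hilt⟩)
      obtain ⟨k, -, hk⟩ := Finset.mem_image.1 ha
      obtain ⟨k', -, hk'⟩ := Finset.mem_image.1 hb
      haveI : NeZero (d ^ (i + 1)) := ⟨(pow_pos hd0 (i + 1)).ne'⟩
      have hMdvd : d ^ (i + 1) ∣ d ^ n := pow_dvd_pow d (by omega)
      set φ := ZMod.castHom hMdvd (ZMod (d ^ (i + 1))) with hφ
      have hxv : ((v : ℕ) : ZMod (d ^ n)) = x := by
        rw [hvdef, ZMod.natCast_val, ZMod.cast_id]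
      have heq : ((g i k : ℕ) : ZMod (d ^ (i + 1))) - ((g i k' : ℕ) : ZMod (d ^ (i + 1)))
          = ((v : ℕ) : ZMod (d ^ (i + 1))) := by
        have := congrArg φ hab
        rw [← hk, ← hk', ← hxv] at this
        simpa using this
      set u := (k : ℕ) % d ^ i with hudef
      set u' := (k' : ℕ) % d ^ i with hu'def
      have e1 : ((g i k : ℕ) : ZMod (d ^ (i + 1))) = ((u : ℕ) : ZMod (d ^ (i + 1))) := by
        rw [← ZMod.natCast_mod, hgmod]
      have e2 : ((g i k' : ℕ) : ZMod (d ^ (i + 1))) = ((u' : ℕ) : ZMod (d ^ (i + 1))) := by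
        rw [← ZMod.natCast_mod, hgmod]
      have e3 : ((v : ℕ) : ZMod (d ^ (i + 1))) = ((d ^ i * c : ℕ) : ZMod (d ^ (i + 1))) := by
        rw [← ZMod.natCast_mod, hvmod]
      rw [e1, e2, e3] at heq
      have heq2 : ((u : ℕ) : ZMod (d ^ (i + 1))) = ((u' + d ^ i * c : ℕ) : ZMod (d ^ (i + 1))) := by
        rw [Nat.cast_add, ← heq]
        ring
      have hu_lt : u < d ^ i := Nat.mod_lt _ (pow_pos hd0 i)
      have hu'_lt : u' < d ^ i := Nat.mod_lt _ (pow_pos hd0 i)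
      have hpow : d ^ i * d = d ^ (i + 1) := (pow_succ d i).symm
      have hbound : u' + d ^ i * c < d ^ (i + 1) := by
        have h5 : d ^ i * c ≤ d ^ i * (d - 1) := Nat.mul_le_mul_left _ (by omega)
        have h6 : d ^ i * (d - 1) + d ^ i = d ^ i * d := by
          rw [Nat.mul_sub_one]
          have := Nat.le_mul_of_pos_right (d ^ i) hd0
          omega
        omega
      have hfin : u = u' + d ^ i * c := by
        have h7 := ZMod.val_cast_of_lt (lt_of_lt_of_le hu_lt
          (Nat.pow_le_pow_right hd0 (by omega : i ≤ i + 1)))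
        have h8 := ZMod.val_cast_of_lt hbound
        rw [heq2] at h7
        rw [h7] at h8
        exact h8
      have hge : d ^ i ≤ d ^ i * c := Nat.le_mul_of_pos_right _ (by omega)
      have hge2 : d ^ i ≤ u := by
        rw [hfin]
        exact le_trans hge (Nat.le_add_left _ _)
      exact Nat.lt_irrefl _ (lt_of_le_of_lt hge2 hu_lt)
    · intro hx i
      rw [hx]
      have hmem : ((g i 0 : ℕ) : ZMod (d ^ n)) ∈ Finset.image
          (fun k : Fin (d ^ (n - 1)) => ((g i k : ℕ) : ZMod (d ^ n))) Finset.univ := by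
        refine Finset.mem_image.2 ⟨⟨0, pow_pos hd0 _⟩, Finset.mem_univ _, rfl⟩
      have := Finset.sub_mem_sub hmem hmem
      simpa using this
end

section
/- For k ≥ 2 and n with 2^n ≥ 2k − 2, the hat-guessing number of the windmill graph W_{k,n} equals 2k − 2. -/
/-- The windmill graph `W_{k,n}`: `n` copies of `K_k` glued at a single vertex (the axle,
represented by `none`); vertex `some (i, a)` is vertex `a` of the `i`-th blade. -/
def windmillGraph (k n : ℕ) : SimpleGraph (Option (Fin n × Fin (k - 1))) where
  Adj x y := x ≠ y ∧ ∀ a b, x = some a → y = some b → a.1 = b.1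
  symm := ⟨fun _ _ h => ⟨h.1.symm, fun a b ha hb => (h.2 b a hb ha).symm⟩⟩
  loopless := ⟨fun _ h => h.1 rfl⟩

namespace WindmillAux

variable {k n : ℕ}

lemma adj_none_some (x : Fin n × Fin (k - 1)) : (windmillGraph k n).Adj none (some x) :=
  ⟨fun h => (by cases h), fun _ _ h _ => (by cases h)⟩

lemma adj_some_none (x : Fin n × Fin (k - 1)) : (windmillGraph k n).Adj (some x) none :=
  (adj_none_some x).symm

lemma adj_some_some (i : Fin n) {a b : Fin (k - 1)} (h : ¬ b = a) :
    (windmillGraph k n).Adj (some (i, a)) (some (i, b)) := by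
  refine ⟨fun he => h ?_, fun p r hp hr => by cases Option.some.inj hp; cases Option.some.inj hr; rfl⟩
  have := Option.some.inj he
  exact (congrArg Prod.snd this).symm

lemma adj_fst {p r : Fin n × Fin (k - 1)} (h : (windmillGraph k n).Adj (some p) (some r)) :
    p.1 = r.1 := h.2 p r rfl rfl

/-- target values -/
def tau (k : ℕ) (hk : 2 ≤ k) (b : Bool) (a : Fin (k - 1)) : Fin (2 * k - 2) :=
  ⟨(bif b then (k - 1) else 0) + a.val, by have := a.isLt; cases b <;> simp <;> omega⟩

/-- which half a color lies in -/
def half (k : ℕ) (s : Fin (2 * k - 2)) : Bool := decide (k - 1 ≤ s.val)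

lemma half_tau (hk : 2 ≤ k) (b : Bool) (a : Fin (k - 1)) : half k (tau k hk b a) = b := by
  have := a.isLt
  cases b <;> simp [half, tau] <;> omega

lemma exists_tau (hk : 2 ≤ k) (s : Fin (2 * k - 2)) : ∃ a, tau k hk (half k s) a = s := by
  have hs := s.isLt
  by_cases h : k - 1 ≤ s.val
  · refine ⟨⟨s.val - (k - 1), by omega⟩, ?_⟩
    have : half k s = true := by simp [half, h]
    rw [this]
    apply Fin.ext
    simp [tau]
    omega
  · refine ⟨⟨s.val, by omega⟩, ?_⟩
    have : half k s = false := by simp [half]; omega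
    rw [this]
    apply Fin.ext
    simp [tau]

/-- the lower-bound strategy -/
noncomputable def lowerF (k n : ℕ) (hk : 2 ≤ k) (φ : Fin (2 * k - 2) → Fin n → Bool) :
    ∀ v : Option (Fin n × Fin (k - 1)),
      ((windmillGraph k n).neighborSet v → Fin (2 * k - 2)) → Fin (2 * k - 2) :=
  letI : NeZero (2 * k - 2) := ⟨by omega⟩
  fun v => match v with
  | none => fun x =>
      Function.invFun φ
        (fun j => ! half k (∑ b : Fin (k - 1), x ⟨some (j, b), adj_none_some _⟩))
  | some (i, a) => fun x =>
      tau k hk (φ (x ⟨none, adj_some_none _⟩) i) a -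
        ∑ b : Fin (k - 1), if h : b = a then 0 else x ⟨some (i, b), adj_some_some i h⟩

lemma lower (hk : 2 ≤ k) (hn : 2 * k - 2 ≤ 2 ^ n) :
    HatGuessingWins (windmillGraph k n) (2 * k - 2) := by
  classical
  haveI : NeZero (2 * k - 2) := ⟨by omega⟩
  obtain ⟨φ⟩ : Nonempty (Fin (2 * k - 2) ↪ (Fin n → Bool)) := by
    apply Function.Embedding.nonempty_of_card_le
    simpa using hn
  refine ⟨lowerF k n hk φ, fun c => ?_⟩
  set S : Fin n → Fin (2 * k - 2) := fun j => ∑ b : Fin (k - 1), c (some (j, b)) with hS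
  by_cases hblade : ∃ i a, lowerF k n hk φ (some (i, a)) (fun u => c u.1) = c (some (i, a))
  · obtain ⟨i, a, h⟩ := hblade
    exact ⟨some (i, a), h⟩
  · push_neg at hblade
    refine ⟨none, ?_⟩
    have key : ∀ i : Fin n, half k (S i) = ! (φ (c none) i) := by
      intro i
      by_contra hcon
      have hb : half k (S i) = φ (c none) i := by
        cases hhh : half k (S i) <;> cases hff : φ (c none) i <;> simp_all
      obtain ⟨a, ha⟩ := exists_tau hk (S i)
      rw [hb] at ha
      apply hblade i a
      show tau k hk (φ (c none) i) a -
          (∑ b : Fin (k - 1), if h : b = a then 0 else c (some (i, b))) = c (some (i, a))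
      have hsum : (∑ b : Fin (k - 1), if _ : b = a then (0 : Fin (2 * k - 2)) else c (some (i, b)))
          = S i - c (some (i, a)) := by
        rw [eq_sub_iff_add_eq, hS]
        have : ∀ b : Fin (k - 1),
            (if _ : b = a then (0 : Fin (2 * k - 2)) else c (some (i, b)))
              = c (some (i, b)) - (if b = a then c (some (i, b)) else 0) := by
          intro b
          by_cases hba : b = a <;> simp [hba]
        rw [Finset.sum_congr rfl (fun b _ => this b), Finset.sum_sub_distrib,
          Fintype.sum_ite_eq' a (fun b => c (some (i, b)))]
        abel
      rw [hsum, ha]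
      abel
    show Function.invFun φ (fun j => ! half k (S j)) = c none
    have : (fun j => ! half k (S j)) = φ (c none) := by
      funext j
      rw [key j, Bool.not_not]
    rw [this]
    exact Function.leftInverse_invFun φ.injective (c none)

/-- canonical input to a blade vertex -/
def bladeInput (k n q : ℕ) (i : Fin n) (a : Fin (k - 1)) (t : Fin q) (x : Fin (k - 1) → Fin q) :
    ((windmillGraph k n).neighborSet (some (i, a)) → Fin q) :=
  fun u => match u with
  | ⟨none, _⟩ => t
  | ⟨some pr, _⟩ => x pr.2

lemma upper (hk : 2 ≤ k) (q' : ℕ) (hw : HatGuessingWins (windmillGraph k n) q') :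
    q' ≤ 2 * k - 2 := by
  classical
  by_contra hq'
  push_neg at hq'
  have hq3 : 2 * k - 1 ≤ q' := by omega
  haveI : NeZero q' := ⟨by omega⟩
  obtain ⟨f, hwin⟩ := hw
  -- the set of blade colorings on which some blade vertex guesses correctly,
  -- given axle color t
  set W : Fin n → Fin q' → Finset (Fin (k - 1) → Fin q') := fun i t =>
    Finset.univ.filter
      (fun x => ∃ a, f (some (i, a)) (bladeInput k n q' i a t x) = x a) with hWdef
  set M : ℕ := q' ^ (k - 1 - 1) with hM
  have hMpos : 1 ≤ M := Nat.one_le_iff_ne_zero.mpr (pow_ne_zero _ (by omega))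
  have hcardW : ∀ i t, (W i t).card ≤ (k - 1) * M := by
    intro i t
    have hsub : W i t ⊆ Finset.univ.biUnion (fun a : Fin (k - 1) =>
        Finset.univ.filter (fun x => f (some (i, a)) (bladeInput k n q' i a t x) = x a)) := by
      intro x hx
      rw [hWdef, Finset.mem_filter] at hx
      obtain ⟨-, a, ha⟩ := hx
      exact Finset.mem_biUnion.2 ⟨a, Finset.mem_univ a, Finset.mem_filter.2 ⟨Finset.mem_univ x, ha⟩⟩
    refine (Finset.card_le_card hsub).trans ((Finset.card_biUnion_le).trans ?_)
    have hone : ∀ a : Fin (k - 1),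
        (Finset.univ.filter (fun x => f (some (i, a)) (bladeInput k n q' i a t x) = x a)).card
          ≤ M := by
      intro a
      -- the guess only depends on coordinates ≠ a
      have hdep : ∀ x y : Fin (k - 1) → Fin q', (∀ b, b ≠ a → x b = y b) →
          bladeInput k n q' i a t x = bladeInput k n q' i a t y := by
        intro x y hxy
        funext u
        obtain ⟨w, hw⟩ := u
        match w with
        | none => rfl
        | some (j, b) =>
          show x b = y b
          apply hxy
          intro hba
          subst hba
          have hij : i = j := adj_fst hw
          exact hw.1 (by rw [hij])
      have hinj : Set.InjOn (fun (x : Fin (k - 1) → Fin q') (b : {b : Fin (k - 1) // b ≠ a}) => x b.1)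
          ((Finset.univ.filter
            (fun x => f (some (i, a)) (bladeInput k n q' i a t x) = x a)) : Finset _) := by
        intro x hx y hy hxy
        rw [Finset.coe_filter] at hx hy
        obtain ⟨-, hx⟩ := hx
        obtain ⟨-, hy⟩ := hy
        have hne : ∀ b, b ≠ a → x b = y b := fun b hb => congrFun hxy ⟨b, hb⟩
        funext b
        by_cases hba : b = a
        · subst hba
          rw [← hx, ← hy, hdep x y hne]
        · exact hne b hba
      have := Finset.card_le_card_of_injOn _ (fun x _ => Finset.mem_univ _) hinj
      refine this.trans ?_
      rw [Finset.card_univ, Fintype.card_fun, Fintype.card_fin]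
      have : Fintype.card {b : Fin (k - 1) // b ≠ a} = k - 1 - 1 := by
        rw [Fintype.card_subtype_compl, Fintype.card_subtype_eq, Fintype.card_fin]
      rw [this]
    calc (∑ a : Fin (k - 1), (Finset.univ.filter
          (fun x => f (some (i, a)) (bladeInput k n q' i a t x) = x a)).card)
        ≤ ∑ _a : Fin (k - 1), M := Finset.sum_le_sum (fun a _ => hone a)
      _ = (k - 1) * M := by rw [Finset.sum_const, Finset.card_univ, Fintype.card_fin, smul_eq_mul]
  -- for each blade there is a coloring fooling both axle colors 0 and 1
  have hinter : ∀ i : Fin n, ∃ x, x ∉ W i 0 ∧ x ∉ W i 1 := by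
    intro i
    have htotal : Fintype.card (Fin (k - 1) → Fin q') = M * q' := by
      rw [Fintype.card_fun, Fintype.card_fin, Fintype.card_fin, hM,
        ← pow_succ]
      congr 1
      omega
    have hlt : (W i 0 ∪ W i 1).card < Fintype.card (Fin (k - 1) → Fin q') := by
      have h1 := hcardW i 0
      have h2 := hcardW i 1
      have hU := Finset.card_union_le (W i 0) (W i 1)
      rw [htotal]
      have h3 : M * (2 * k - 1) ≤ M * q' := Nat.mul_le_mul_left M hq3
      have h4 : M * (2 * k - 1) = 2 * ((k - 1) * M) + M := by
        have : 2 * k - 1 = 2 * (k - 1) + 1 := by omega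
        rw [this]; ring
      omega
    have hne : ((W i 0 ∪ W i 1)ᶜ : Finset _).Nonempty := by
      rw [← Finset.card_pos, Finset.card_compl]
      omega
    obtain ⟨x, hx⟩ := hne
    rw [Finset.mem_compl, Finset.mem_union] at hx
    push_neg at hx
    exact ⟨x, hx⟩
  choose x hx0 hx1 using hinter
  -- the fooling coloring
  set g : Fin q' := f none (fun u => (fun v : Option (Fin n × Fin (k - 1)) =>
      match v with
      | none => (0 : Fin q')
      | some pr => x pr.1 pr.2) u.1) with hg
  set c : Option (Fin n × Fin (k - 1)) → Fin q' := fun v =>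
    match v with
    | none => if g = 0 then 1 else 0
    | some pr => x pr.1 pr.2 with hc
  have h01 : (0 : Fin q') ≠ 1 := by
    rw [Fin.ne_iff_vne, Fin.val_zero, Fin.val_one']
    rw [Nat.mod_eq_of_lt (by omega)]
    omega
  obtain ⟨v, hv⟩ := hwin c
  match v with
  | none =>
    have heq : (fun u : (windmillGraph k n).neighborSet none => c u.1)
        = (fun u => (fun v : Option (Fin n × Fin (k - 1)) =>
            match v with
            | none => (0 : Fin q')
            | some pr => x pr.1 pr.2) u.1) := by
      funext u
      obtain ⟨w, hw⟩ := u
      match w with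
      | none => exact absurd rfl hw.1
      | some pr => rfl
    rw [heq] at hv
    change g = c none at hv
    rw [hc] at hv
    by_cases hg0 : g = 0
    · rw [if_pos hg0] at hv
      exact h01 (hg0 ▸ hv)
    · rw [if_neg hg0] at hv
      exact hg0 hv
  | some (i, a) =>
    have ht : c none = 0 ∨ c none = 1 := by
      rw [hc]
      by_cases hg0 : g = 0 <;> simp [hg0]
    have heq : (fun u : (windmillGraph k n).neighborSet (some (i, a)) => c u.1)
        = bladeInput k n q' i a (c none) (x i) := by
      funext u
      obtain ⟨w, hw⟩ := u
      match w with
      | none => rfl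
      | some (j, b) =>
        show c (some (j, b)) = x i b
        have hij : i = j := adj_fst hw
        rw [hc, ← hij]
    rw [heq] at hv
    have hmem : x i ∈ W i (c none) := by
      rw [hWdef, Finset.mem_filter]
      exact ⟨Finset.mem_univ _, a, hv⟩
    rcases ht with h | h
    · exact hx0 i (h ▸ hmem)
    · exact hx1 i (h ▸ hmem)

end WindmillAux

/-- For `k ≥ 2` and `2^n ≥ 2k - 2`, the hat-guessing number of `W_{k,n}` equals `2k - 2`. -/
theorem hat_guessing_windmill (k n : ℕ) (hk : 2 ≤ k) (hn : 2 * k - 2 ≤ 2 ^ n) :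
    IsGreatest {q : ℕ | HatGuessingWins (windmillGraph k n) q} (2 * k - 2) :=
  ⟨WindmillAux.lower hk hn, fun q' hq' => WindmillAux.upper hk q' hq'⟩
end

section
/- For all n ≥ 1 and d ≥ 2, the hat-guessing number of the windmill graph W_{k,n} with k = d^n − d^{n−1} + 1 equals d^n. -/
namespace WM


lemma axle_adj (k n : ℕ) (p : Fin n × Fin (k-1)) : (windmillGraph k n).Adj none (some p) :=
  And.intro (fun h => nomatch h) (fun _ _ ha _ => nomatch ha)

lemma blade_adj_none (k n : ℕ) (p : Fin n × Fin (k-1)) : (windmillGraph k n).Adj (some p) none :=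
  (axle_adj k n p).symm

lemma blade_adj (k n : ℕ) (i : Fin n) {a b : Fin (k-1)} (h : b ≠ a) :
    (windmillGraph k n).Adj (some (i,a)) (some (i,b)) := by
  refine And.intro (fun hc => h ?_) (fun p q hp hq => by cases Option.some.inj hp; cases Option.some.inj hq; rfl)
  have := Option.some.inj hc
  exact (Prod.mk.injEq _ _ _ _ ▸ this).2.symm

lemma neighbor_of_axle {k n : ℕ} {u} (h : (windmillGraph k n).Adj none u) :
    ∃ p, u = some p := by
  match u with
  | none => exact absurd rfl (And.left h)
  | some p => exact ⟨p, rfl⟩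

lemma neighbor_of_blade {k n : ℕ} {i : Fin n} {a : Fin (k-1)} {u}
    (h : (windmillGraph k n).Adj (some (i,a)) u) :
    u = none ∨ ∃ b, b ≠ a ∧ u = some (i, b) := by
  match u with
  | none => exact Or.inl rfl
  | some (j, b) =>
    have h1 : i = j := And.right h (i,a) (j,b) rfl rfl
    subst h1
    exact Or.inr ⟨b, fun hba => (And.left h) (by rw [hba]), rfl⟩



def subEquiv {n d : ℕ} (i : Fin n) (c : Fin d) :
    {f : Fin n → Fin d // f i = c} ≃ ({j : Fin n // j ≠ i} → Fin d) where
  toFun f j := f.1 j.1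
  invFun g := ⟨fun j => if h : j = i then c else g ⟨j, h⟩, by simp⟩
  left_inv := fun f => Subtype.ext (funext fun j => by
    by_cases h : j = i
    · subst h; simp [f.2]
    · simp [h])
  right_inv := fun g => funext fun j => by simp [j.2]

lemma card_digit_eq {n d : ℕ} (i : Fin n) (c : Fin d) :
    Fintype.card {s : Fin (d^n) // finFunctionFinEquiv.symm s i = c} = d ^ (n-1) := by
  have h1 : Fintype.card {s : Fin (d^n) // finFunctionFinEquiv.symm s i = c}
      = Fintype.card {f : Fin n → Fin d // f i = c} :=
    (Fintype.card_congr (Equiv.subtypeEquiv finFunctionFinEquiv (fun f => by simp))).symm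
  rw [h1, Fintype.card_congr (subEquiv i c), Fintype.card_fun,
    Fintype.card_subtype_compl, Fintype.card_subtype_eq]
  simp

open Finset in
lemma card_C {n d : ℕ} (i : Fin n) (X : Fin (d^n)) :
    (Finset.univ.filter (fun s : Fin (d^n) =>
      finFunctionFinEquiv.symm s i ≠ finFunctionFinEquiv.symm X i)).card
      = d^n - d^(n-1) := by
  classical
  have h := card_digit_eq i (finFunctionFinEquiv.symm X i)
  rw [Fintype.card_subtype] at h
  rw [Finset.filter_not, Finset.card_sdiff_of_subset (Finset.filter_subset _ _), h,
    Finset.card_univ, Fintype.card_fin]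

noncomputable def enum (n d : ℕ) (i : Fin n) (X : Fin (d^n)) :
    Fin (d^n - d^(n-1)) → Fin (d^n) :=
  fun a => ((Finset.equivFinOfCardEq (card_C i X)).symm a).1

lemma enum_mem {n d : ℕ} (i : Fin n) (X : Fin (d^n)) (a : Fin (d^n - d^(n-1))) :
    finFunctionFinEquiv.symm (enum n d i X a) i ≠ finFunctionFinEquiv.symm X i := by
  exact (Finset.mem_filter.mp ((Finset.equivFinOfCardEq (card_C i X)).symm a).2).2

lemma enum_surj {n d : ℕ} (i : Fin n) (X : Fin (d^n)) (s : Fin (d^n))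
    (hs : finFunctionFinEquiv.symm s i ≠ finFunctionFinEquiv.symm X i) :
    ∃ a, enum n d i X a = s := by
  refine ⟨Finset.equivFinOfCardEq (card_C i X) ⟨s, by simp [hs]⟩, ?_⟩
  simp [enum]




lemma pow_ineq (n d t : ℕ) (hn : 1 ≤ n) (hd : 2 ≤ d) (ht : 1 ≤ t) :
    (d ^ n + t) ^ (n - 1) < (d ^ (n - 1) + t) ^ n := by
  obtain ⟨k, rfl⟩ : ∃ k, n = k + 1 := ⟨n - 1, by omega⟩
  simp only [Nat.add_sub_cancel]
  have hx : 0 < d ^ k := pow_pos (by omega) _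
  have hdn : d ^ (k + 1) = d * d ^ k := by rw [pow_succ]; ring
  have key : d ^ k * (d ^ (k+1) + t) ^ k < d ^ k * (d ^ k + t) ^ (k+1) := by
    calc d ^ k * (d ^ (k+1) + t) ^ k
        < (d ^ k + t) * (d ^ (k+1) + t) ^ k := by
          have h1 : 0 < (d ^ (k+1) + t) ^ k := by positivity
          have h2 : d ^ k < d ^ k + t := by omega
          exact Nat.mul_lt_mul_of_lt_of_le h2 (le_refl _) h1
      _ ≤ (d ^ k + t) * (d ^ (k+1) + d * t) ^ k := by
          gcongr
          have : t ≤ d * t := Nat.le_mul_of_pos_left t (by omega)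
          omega
      _ = (d ^ k + t) * (d * (d ^ k + t)) ^ k := by rw [hdn, Nat.mul_add]
      _ = d ^ k * (d ^ k + t) ^ (k+1) := by rw [mul_pow, pow_succ]; ring
  exact lt_of_mul_lt_mul_left key (Nat.zero_le _)

section Upper

variable (n d q : ℕ)
  (f : ∀ v : Option (Fin n × Fin (d ^ n - d ^ (n - 1) + 1 - 1)),
    ((windmillGraph (d ^ n - d ^ (n - 1) + 1) n).neighborSet v → Fin q) → Fin q)

def cfull (X : Fin q) (b : Fin n → Fin (d ^ n - d ^ (n - 1) + 1 - 1) → Fin q) :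
    Option (Fin n × Fin (d ^ n - d ^ (n - 1) + 1 - 1)) → Fin q
  | none => X
  | some p => b p.1 p.2

noncomputable def gBlade (X : Fin q) (β : Fin (d ^ n - d ^ (n - 1) + 1 - 1) → Fin q)
    (i : Fin n) (a : Fin (d ^ n - d ^ (n - 1) + 1 - 1)) : Fin q :=
  f (some (i, a)) (fun u => cfull n d q X (fun _ => β) u.1)

noncomputable def Bad (X : Fin q) (i : Fin n) :
    Finset (Fin (d ^ n - d ^ (n - 1) + 1 - 1) → Fin q) :=
  @Finset.filter _ (fun β => ∀ a, gBlade n d q f X β i a ≠ β a)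
    (Classical.decPred _) Finset.univ

lemma restrict_blade_eq (X : Fin q) (b : Fin n → Fin (d ^ n - d ^ (n - 1) + 1 - 1) → Fin q)
    (i : Fin n) (a : Fin (d ^ n - d ^ (n - 1) + 1 - 1)) :
    (fun u : (windmillGraph (d ^ n - d ^ (n - 1) + 1) n).neighborSet (some (i,a)) =>
        cfull n d q X b u.1)
      = (fun u => cfull n d q X (fun _ => b i) u.1) := by
  funext u
  obtain ⟨u, hu⟩ := u
  rcases neighbor_of_blade hu with h | ⟨bb, hba, h⟩ <;> subst h <;> rfl

lemma restrict_axle_eq (X X' : Fin q) (b : Fin n → Fin (d ^ n - d ^ (n - 1) + 1 - 1) → Fin q) :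
    (fun u : (windmillGraph (d ^ n - d ^ (n - 1) + 1) n).neighborSet none =>
        cfull n d q X b u.1)
      = (fun u => cfull n d q X' b u.1) := by
  funext u
  obtain ⟨u, hu⟩ := u
  obtain ⟨p, rfl⟩ := neighbor_of_axle hu
  rfl

lemma gBlade_congr (X : Fin q) (β β' : Fin (d ^ n - d ^ (n - 1) + 1 - 1) → Fin q)
    (i : Fin n) (a : Fin (d ^ n - d ^ (n - 1) + 1 - 1))
    (h : ∀ x, x ≠ a → β x = β' x) :
    gBlade n d q f X β i a = gBlade n d q f X β' i a := by
  unfold gBlade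
  congr 1
  funext u
  obtain ⟨u, hu⟩ := u
  rcases neighbor_of_blade hu with h' | ⟨bb, hba, h'⟩
  · subst h'; rfl
  · subst h'; exact h bb hba

open Classical in
lemma card_Agood (X : Fin q) (i : Fin n) (a : Fin (d ^ n - d ^ (n - 1) + 1 - 1)) :
    (Finset.univ.filter (fun β : Fin (d ^ n - d ^ (n - 1) + 1 - 1) → Fin q =>
        gBlade n d q f X β i a = β a)).card
      ≤ q ^ (d ^ n - d ^ (n - 1) - 1) := by
  have hcard : Fintype.card ({x : Fin (d ^ n - d ^ (n - 1) + 1 - 1) // x ≠ a} → Fin q)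
      = q ^ (d ^ n - d ^ (n - 1) - 1) := by
    rw [Fintype.card_fun, Fintype.card_subtype_compl, Fintype.card_subtype_eq,
      Fintype.card_fin, Fintype.card_fin]
    congr 1
  refine le_trans (Finset.card_le_card_of_injOn
    (fun β (x : {x : Fin (d ^ n - d ^ (n - 1) + 1 - 1) // x ≠ a}) => β x.1)
    (fun β _ => Finset.mem_univ _) ?_) (by rw [Finset.card_univ, hcard])
  intro β hβ β' hβ' heq
  simp only [Finset.coe_filter, Set.mem_setOf_eq, Finset.mem_univ, true_and] at hβ hβ'
  have agree : ∀ x, x ≠ a → β x = β' x := fun x hx => congrFun heq ⟨x, hx⟩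
  funext x
  by_cases hx : x = a
  · subst hx
    rw [← hβ, ← hβ', gBlade_congr n d q f X β β' i x agree]
  · exact agree x hx

open Classical in
lemma card_Bad (X : Fin q) (i : Fin n) (hM : 1 ≤ d ^ n - d ^ (n - 1)) :
    q ^ (d ^ n - d ^ (n - 1) - 1) * (q - (d ^ n - d ^ (n - 1)))
      ≤ (Bad n d q f X i).card := by
  have huniv : (Finset.univ : Finset (Fin (d ^ n - d ^ (n - 1) + 1 - 1) → Fin q)).card
      = q ^ (d ^ n - d ^ (n - 1)) := by
    simp [Finset.card_univ]
  have hBad : Bad n d q f X i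
      = Finset.univ.filter (fun β => ∀ a, gBlade n d q f X β i a ≠ β a) := by
    unfold Bad
    rw [Finset.filter_congr_decidable]
  have hsplit := Finset.card_filter_add_card_filter_not
    (s := (Finset.univ : Finset (Fin (d ^ n - d ^ (n - 1) + 1 - 1) → Fin q)))
    (p := fun β => ∀ a, gBlade n d q f X β i a ≠ β a)
  rw [huniv, ← hBad] at hsplit
  have hsub : (Finset.univ.filter (fun β : Fin (d ^ n - d ^ (n - 1) + 1 - 1) → Fin q =>
          ¬ ∀ a, gBlade n d q f X β i a ≠ β a))
      ⊆ Finset.univ.biUnion (fun a => Finset.univ.filter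
          (fun β => gBlade n d q f X β i a = β a)) := by
    intro β hβ
    simp only [Finset.mem_filter, Finset.mem_univ, true_and, not_forall, not_not] at hβ
    obtain ⟨a, ha⟩ := hβ
    simp only [Finset.mem_biUnion, Finset.mem_filter, Finset.mem_univ, true_and]
    exact ⟨a, ha⟩
  have hcompl : (Finset.univ.filter (fun β : Fin (d ^ n - d ^ (n - 1) + 1 - 1) → Fin q =>
          ¬ ∀ a, gBlade n d q f X β i a ≠ β a)).card
      ≤ (d ^ n - d ^ (n - 1)) * q ^ (d ^ n - d ^ (n - 1) - 1) := by
    refine le_trans (Finset.card_le_card hsub) (le_trans Finset.card_biUnion_le ?_)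
    refine le_trans (Finset.sum_le_sum (fun a _ => card_Agood n d q f X i a)) ?_
    rw [Finset.sum_const, Finset.card_univ, smul_eq_mul]
    simp
  have hqM : q ^ (d ^ n - d ^ (n - 1))
      = q ^ (d ^ n - d ^ (n - 1) - 1) * q := by
    conv_lhs => rw [← Nat.sub_add_cancel hM]
    rw [pow_succ]
  rcases le_or_gt (d ^ n - d ^ (n - 1)) q with hqge | hqlt
  · have hCc : (Finset.univ.filter (fun β : Fin (d ^ n - d ^ (n - 1) + 1 - 1) → Fin q =>
          ¬ ∀ a, gBlade n d q f X β i a ≠ β a)).card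
        ≤ q ^ (d ^ n - d ^ (n - 1) - 1) * (d ^ n - d ^ (n - 1)) :=
      le_trans hcompl (le_of_eq (Nat.mul_comm _ _))
    calc q ^ (d ^ n - d ^ (n - 1) - 1) * (q - (d ^ n - d ^ (n - 1)))
        = q ^ (d ^ n - d ^ (n - 1) - 1) * q
          - q ^ (d ^ n - d ^ (n - 1) - 1) * (d ^ n - d ^ (n - 1)) := Nat.mul_sub _ _ _
      _ = q ^ (d ^ n - d ^ (n - 1))
          - q ^ (d ^ n - d ^ (n - 1) - 1) * (d ^ n - d ^ (n - 1)) := by rw [← hqM]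
      _ ≤ (Bad n d q f X i).card :=
          le_trans (Nat.sub_le_sub_left hCc _)
            (le_of_eq (by rw [← hsplit, Nat.add_sub_cancel]))
  · have h0 : q - (d ^ n - d ^ (n - 1)) = 0 := Nat.sub_eq_zero_of_le (le_of_lt hqlt)
    rw [h0, Nat.mul_zero]
    exact Nat.zero_le _

end Upper

lemma upper (n d : ℕ) (hn : 1 ≤ n) (hd : 2 ≤ d) (q : ℕ)
    (hwin : HatGuessingWins (windmillGraph (d ^ n - d ^ (n - 1) + 1) n) q) :
    q ≤ d ^ n := by
  classical
  by_contra hlt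
  push_neg at hlt
  obtain ⟨f, hf⟩ := hwin
  have hdpow : d ^ (n - 1) < d ^ n := Nat.pow_lt_pow_right (by omega) (by omega)
  have hM1 : 1 ≤ d ^ n - d ^ (n - 1) := by omega
  -- every coloring built from bad blade colorings forces the axle to guess X
  have hG : ∀ (X : Fin q) (b : Fin n → Fin (d ^ n - d ^ (n - 1) + 1 - 1) → Fin q),
      b ∈ Fintype.piFinset (fun i => Bad n d q f X i) →
      f none (fun u => cfull n d q X b u.1) = X := by
    intro X b hb
    obtain ⟨v, hv⟩ := hf (cfull n d q X b)
    rcases v with _ | ⟨i, a⟩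
    · exact hv
    · exfalso
      rw [Fintype.mem_piFinset] at hb
      have hbi := hb i
      unfold Bad at hbi
      rw [Finset.filter_congr_decidable, Finset.mem_filter] at hbi
      refine hbi.2 a ?_
      show gBlade n d q f X (b i) i a = b i a
      unfold gBlade
      rw [← restrict_blade_eq n d q X b i a]
      exact hv
  have hdisj : ∀ X ∈ (Finset.univ : Finset (Fin q)), ∀ X' ∈ Finset.univ, X ≠ X' →
      Disjoint (Fintype.piFinset (fun i => Bad n d q f X i))
        (Fintype.piFinset (fun i => Bad n d q f X' i)) := by
    intro X _ X' _ hne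
    rw [Finset.disjoint_left]
    intro b hb hb'
    apply hne
    rw [← hG X b hb, ← hG X' b hb', restrict_axle_eq n d q X X' b]
  have hbox : ∀ X : Fin q,
      (q ^ (d ^ n - d ^ (n - 1) - 1) * (q - (d ^ n - d ^ (n - 1)))) ^ n
        ≤ (Fintype.piFinset (fun i => Bad n d q f X i)).card := by
    intro X
    rw [Fintype.card_piFinset]
    calc (q ^ (d ^ n - d ^ (n - 1) - 1) * (q - (d ^ n - d ^ (n - 1)))) ^ n
        = ∏ _i : Fin n, (q ^ (d ^ n - d ^ (n - 1) - 1) * (q - (d ^ n - d ^ (n - 1)))) := by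
          rw [Finset.prod_const, Finset.card_univ, Fintype.card_fin]
      _ ≤ ∏ i : Fin n, (Bad n d q f X i).card :=
          Finset.prod_le_prod (fun _ _ => Nat.zero_le _)
            (fun i _ => card_Bad n d q f X i hM1)
  have hsum : q * (q ^ (d ^ n - d ^ (n - 1) - 1) * (q - (d ^ n - d ^ (n - 1)))) ^ n
      ≤ ∑ X : Fin q, (Fintype.piFinset (fun i => Bad n d q f X i)).card := by
    have h := Finset.card_nsmul_le_sum Finset.univ
      (fun X : Fin q => (Fintype.piFinset (fun i => Bad n d q f X i)).card)
      ((q ^ (d ^ n - d ^ (n - 1) - 1) * (q - (d ^ n - d ^ (n - 1)))) ^ n)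
      (fun X _ => hbox X)
    simpa [Finset.card_univ, smul_eq_mul] using h
  have hunion : (∑ X : Fin q, (Fintype.piFinset (fun i => Bad n d q f X i)).card)
      ≤ (q ^ (d ^ n - d ^ (n - 1))) ^ n := by
    rw [← Finset.card_biUnion hdisj]
    refine le_trans (Finset.card_le_univ _) (le_of_eq ?_)
    simp [Fintype.card_fun, pow_mul]
  have hkey := le_trans hsum hunion
  -- pure arithmetic from here on
  obtain ⟨k, hk⟩ : ∃ k, d ^ n - d ^ (n - 1) = k + 1 :=
    ⟨d ^ n - d ^ (n - 1) - 1, by omega⟩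
  rw [hk] at hkey
  simp only [Nat.add_sub_cancel] at hkey
  have expand : (q ^ k * (q - (k + 1))) ^ n = q ^ (k * n) * (q - (k + 1)) ^ n := by
    rw [mul_pow, ← pow_mul]
  have expand2 : (q ^ (k + 1)) ^ n = q ^ (k * n) * q ^ n := by
    rw [← pow_mul, add_mul, one_mul, pow_add]
  rw [expand, expand2, mul_left_comm] at hkey
  have hq0 : 0 < q := lt_of_le_of_lt (Nat.zero_le _) hlt
  have hfin : q * (q - (k + 1)) ^ n ≤ q ^ n :=
    Nat.le_of_mul_le_mul_left hkey (pow_pos hq0 _)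
  -- contradiction with pow_ineq
  have hineq := pow_ineq n d (q - d ^ n) hn hd (by omega)
  have hq_eq : d ^ n + (q - d ^ n) = q := by omega
  have hqM : q - (k + 1) = d ^ (n - 1) + (q - d ^ n) := by omega
  rw [hq_eq, ← hqM] at hineq
  have hqn : q ^ n = q ^ (n - 1) * q := by
    conv_lhs => rw [← Nat.sub_add_cancel hn]
    rw [pow_succ]
  have h2 : q * q ^ (n - 1) + q ≤ q * (q - (k + 1)) ^ n := by
    calc q * q ^ (n - 1) + q = q * (q ^ (n - 1) + 1) := by ring
      _ ≤ q * (q - (k + 1)) ^ n := Nat.mul_le_mul_left _ (by omega)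
  have hcomm : q ^ (n - 1) * q = q * q ^ (n - 1) := Nat.mul_comm _ _
  omega



lemma lower (n d : ℕ) (hn : 1 ≤ n) (hd : 2 ≤ d) :
    HatGuessingWins (windmillGraph (d ^ n - d ^ (n - 1) + 1) n) (d ^ n) := by
  classical
  haveI : NeZero (d ^ n) := ⟨by positivity⟩
  refine ⟨fun v =>
    match v with
    | none => fun u => finFunctionFinEquiv (fun i =>
        finFunctionFinEquiv.symm
          (∑ a : Fin (d ^ n - d ^ (n - 1) + 1 - 1), u ⟨some (i, a), axle_adj _ n (i, a)⟩) i)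
    | some p => fun u =>
        enum n d p.1 (u ⟨none, blade_adj_none _ n p⟩) p.2
          - ∑ b : Fin (d ^ n - d ^ (n - 1) + 1 - 1),
              if h : b = p.2 then 0 else u ⟨some (p.1, b), blade_adj _ n p.1 h⟩, ?_⟩
  intro c
  by_cases hcase : ∀ i : Fin n, finFunctionFinEquiv.symm
      (∑ a : Fin (d ^ n - d ^ (n - 1) + 1 - 1), c (some (i, a))) i
      = finFunctionFinEquiv.symm (c none) i
  · refine ⟨none, ?_⟩
    show finFunctionFinEquiv (fun i => finFunctionFinEquiv.symm
      (∑ a : Fin (d ^ n - d ^ (n - 1) + 1 - 1), c (some (i, a))) i) = c none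
    have heq : (fun i => finFunctionFinEquiv.symm
        (∑ a : Fin (d ^ n - d ^ (n - 1) + 1 - 1), c (some (i, a))) i)
        = fun i => finFunctionFinEquiv.symm (c none) i := funext fun i => hcase i
    rw [heq]
    exact finFunctionFinEquiv.apply_symm_apply (c none)
  · push_neg at hcase
    obtain ⟨i, hi⟩ := hcase
    obtain ⟨a, ha⟩ := enum_surj i (c none)
      (∑ b : Fin (d ^ n - d ^ (n - 1) + 1 - 1), c (some (i, b))) hi
    refine ⟨some (i, a), ?_⟩
    show enum n d i (c none) a
        - (∑ b : Fin (d ^ n - d ^ (n - 1) + 1 - 1),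
            if h : b = a then 0 else c (some (i, b))) = c (some (i, a))
    have hdite : (∑ b : Fin (d ^ n - d ^ (n - 1) + 1 - 1),
          if _h : b = a then (0 : Fin (d ^ n)) else c (some (i, b)))
        = ∑ b : Fin (d ^ n - d ^ (n - 1) + 1 - 1), if b = a then 0 else c (some (i, b)) := by
      apply Finset.sum_congr rfl
      intro b _
      by_cases h : b = a <;> simp [h]
    have hsum : (∑ b : Fin (d ^ n - d ^ (n - 1) + 1 - 1), c (some (i, b)))
        = c (some (i, a)) + ∑ b : Fin (d ^ n - d ^ (n - 1) + 1 - 1),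
            if b = a then 0 else c (some (i, b)) := by
      have h1 : (c (some (i, a)))
          = ∑ b : Fin (d ^ n - d ^ (n - 1) + 1 - 1),
              if b = a then c (some (i, b)) else 0 := by
        rw [Finset.sum_ite_eq' (Finset.univ : Finset (Fin (d ^ n - d ^ (n - 1) + 1 - 1))) a]
        simp
      rw [h1, ← Finset.sum_add_distrib]
      apply Finset.sum_congr rfl
      intro b _
      by_cases h : b = a <;> simp [h]
    rw [hdite, sub_eq_iff_eq_add, ha, hsum]

end WM

/-- For `n ≥ 1` and `d ≥ 2`, the hat-guessing number of `W_{d^n - d^{n-1} + 1, n}`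
equals `d^n`. -/
theorem hat_guessing_windmill_dn (n d : ℕ) (hn : 1 ≤ n) (hd : 2 ≤ d) :
    IsGreatest
      {q : ℕ | HatGuessingWins (windmillGraph (d ^ n - d ^ (n - 1) + 1) n) q}
      (d ^ n) :=
  ⟨WM.lower n d hn hd, fun q hq => WM.upper n d hn hd q hq⟩
end
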